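/- arXiv:1509.00447 — 3 statements merged into one kernel-verified Lean document; each statement's English description precedes it below -/
import Mathlib

section
/- The space E^{m,p} of L_p-type fuzzy numbers (u ∈ F_B(ℝ^m)^p with all α-cuts convex for α ∈ (0,1]) is a closed subset of (F_B(ℝ^m)^p, d_p). -/
open Metric Set MeasureTheory Filter

noncomputable section

/-- `Em m` is the Euclidean space ℝ^m. -/
abbrev Em (m : ℕ) := EuclideanSpace ℝ (Fin m)

/-- A set is star-shaped if it contains a point `x` such that the segment from `x`
to any point of the set lies in the set. -/
def StarShaped {m : ℕ} (K : Set (Em m)) : Prop :=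
  ∃ x ∈ K, ∀ y ∈ K, segment ℝ x y ⊆ K

/-- The kernel of a set: all points seeing the whole set. -/
def kern {m : ℕ} (K : Set (Em m)) : Set (Em m) :=
  {x | x ∈ K ∧ ∀ y ∈ K, segment ℝ x y ⊆ K}

/-- Kuratowski upper limit of a sequence of sets. -/
def KLimsup {m : ℕ} (C : ℕ → Set (Em m)) : Set (Em m) :=
  ⋂ n : ℕ, closure (⋃ k : ℕ, ⋃ _ : n ≤ k, C k)

/-- Kuratowski lower limit of a sequence of sets. -/
def KLiminf {m : ℕ} (C : ℕ → Set (Em m)) : Set (Em m) :=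
  {x | ∃ f : ℕ → Em m, (∀ n, f n ∈ C n) ∧ Tendsto f atTop (nhds x)}

/-- The α-cut of a fuzzy set `u`, for α > 0. -/
def acut {m : ℕ} (u : Em m → ℝ) (a : ℝ) : Set (Em m) := {x | a ≤ u x}

/-- The support (0-cut) of a fuzzy set. -/
def fsupp {m : ℕ} (u : Em m → ℝ) : Set (Em m) := closure {x | 0 < u x}

/-- Membership in `F_B(ℝ^m)^p`: normal, upper semi-continuous fuzzy sets with
compact α-cuts for α ∈ (0,1] and α ↦ H([u]_α, {0})^p integrable on (0,1]. -/
structure IsFuzzyBp {m : ℕ} (p : ℝ) (u : Em m → ℝ) : Prop where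
  mem01 : ∀ x, u x ∈ Icc (0:ℝ) 1
  normal : ∃ x, u x = 1
  usc : UpperSemicontinuous u
  compactCuts : ∀ a ∈ Ioc (0:ℝ) 1, IsCompact (acut u a)
  lp : IntegrableOn (fun a => hausdorffDist (acut u a) ({0} : Set (Em m)) ^ p)
        (Ioc (0:ℝ) 1)

/-- Membership in `F_B(ℝ^m)`: normal, upper semi-continuous fuzzy sets with
bounded (hence compact closed) support. -/
structure IsFuzzyB {m : ℕ} (u : Em m → ℝ) : Prop where
  mem01 : ∀ x, u x ∈ Icc (0:ℝ) 1
  normal : ∃ x, u x = 1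
  usc : UpperSemicontinuous u
  bddSupp : Bornology.IsBounded {x | 0 < u x}

/-- The `d_p` metric on fuzzy sets. -/
def dp {m : ℕ} (p : ℝ) (u v : Em m → ℝ) : ℝ :=
  (∫ a in Ioc (0:ℝ) 1, hausdorffDist (acut u a) (acut v a) ^ p) ^ (1/p)

/-- `d_p` distance to the crisp origin `0̂`. -/
def dpOrigin {m : ℕ} (p : ℝ) (u : Em m → ℝ) : ℝ :=
  (∫ a in Ioc (0:ℝ) 1, hausdorffDist (acut u a) ({0} : Set (Em m)) ^ p) ^ (1/p)

/-- Uniformly p-mean bounded family. -/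
def UPMB {m : ℕ} (p : ℝ) (U : Set (Em m → ℝ)) : Prop :=
  ∃ M : ℝ, ∀ u ∈ U, dpOrigin p u ≤ M

/-- p-mean equi-left-continuous family. -/
def PMELC {m : ℕ} (p : ℝ) (U : Set (Em m → ℝ)) : Prop :=
  ∀ ε > (0:ℝ), ∃ δ > (0:ℝ), ∀ h : ℝ, 0 ≤ h → h < δ → ∀ u ∈ U,
    (∫ a in Ioc h 1, hausdorffDist (acut u a) (acut u (a - h)) ^ p) ^ (1/p) < ε

/-- Truncation `u^{(a)}` of a fuzzy set at level `a`. -/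
def ftrunc {m : ℕ} (u : Em m → ℝ) (a : ℝ) : Em m → ℝ :=
  fun x => if a ≤ u x then u x else 0

/-- The kernel of a fuzzy set: intersection of the kernels of its cuts. -/
def fker {m : ℕ} (u : Em m → ℝ) : Set (Em m) :=
  ⋂ a ∈ Ioc (0:ℝ) 1, kern (acut u a)

/-- The full cut-family of a fuzzy set, with the 0-cut being the support. -/
def cutF {m : ℕ} (u : Em m → ℝ) (a : ℝ) : Set (Em m) :=
  if a = 0 then fsupp u else acut u a

/-- Conditions (i)–(iv) of the representation theorem for `F_B(ℝ^m)^p`. -/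
def GoodFamily {m : ℕ} (p : ℝ) (v : ℝ → Set (Em m)) : Prop :=
  (∀ l ∈ Ioc (0:ℝ) 1, (v l).Nonempty ∧ IsCompact (v l)) ∧
  (∀ l ∈ Ioc (0:ℝ) 1, v l = ⋂ g ∈ Ico (0:ℝ) l, v g) ∧
  (v 0 = closure (⋃ g ∈ Ioc (0:ℝ) 1, v g)) ∧
  IntegrableOn (fun a => hausdorffDist (v a) ({0} : Set (Em m)) ^ p) (Ioc (0:ℝ) 1)



/-! Cuts of a fuzzy set decrease to the cut at `a` as the level increases to `a`, and they are
compact, so `a ↦ H([uₙ]_a, [v]_a)` is left-continuous, hence measurable, and `d_p(uₙ, v) → 0`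
is convergence to `0` in `L^p(0, 1]`. A subsequence then converges at almost every level, where
`[v]_a` is a Hausdorff limit of convex compacta and hence convex. Such levels are dense below
every `a`, and `[v]_a` is the intersection of the cuts below it, so every cut is convex. -/

open Topology TopologicalSpace

namespace TopologicalSpace.NonemptyCompacts

theorem subset_cthickening_dist {X : Type*} [MetricSpace X] (K L : NonemptyCompacts X) :
    (K : Set X) ⊆ cthickening (dist K L) L := fun _ hx =>
  mem_cthickening_iff.2 <| (infEDist_le_hausdorffEDist_of_mem hx).trans_eq (edist_dist K L)

theorem isClosed_setOf_convex {E : Type*} [NormedAddCommGroup E] [NormedSpace ℝ E] :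
    IsClosed {K : NonemptyCompacts E | Convex ℝ (K : Set E)} := by
  refine isClosed_of_closure_subset fun K hK x hx y hy s t hs ht hst => ?_
  rw [← K.isCompact.isClosed.closure_eq, closure_eq_iInter_cthickening, mem_iInter₂]
  intro δ hδ
  obtain ⟨C, hC, hKC⟩ := Metric.mem_closure_iff.1 hK (δ / 2) (half_pos hδ)
  have hKC' : (K : Set E) ⊆ cthickening (δ / 2) C :=
    (subset_cthickening_dist K C).trans (cthickening_mono hKC.le _)
  have hCK : (C : Set E) ⊆ cthickening (δ / 2) K :=
    (subset_cthickening_dist C K).trans (cthickening_mono (dist_comm C K ▸ hKC.le) _)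
  have hmem := (hC.cthickening (δ / 2)) (hKC' hx) (hKC' hy) hs ht hst
  have hsub := (cthickening_subset_of_subset (δ / 2) hCK).trans
    (cthickening_cthickening_subset (half_pos hδ).le (half_pos hδ).le (K : Set E))
  simpa using hsub hmem

end TopologicalSpace.NonemptyCompacts

theorem Real.rpow_add_le_mul_rpow_add_rpow {x y p : ℝ} (hx : 0 ≤ x) (hy : 0 ≤ y) (hp : 1 ≤ p) :
    (x + y) ^ p ≤ 2 ^ (p - 1) * (x ^ p + y ^ p) := by
  exact_mod_cast NNReal.rpow_add_le_mul_rpow_add_rpow ⟨x, hx⟩ ⟨y, hy⟩ hp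

theorem tendsto_ceil_sub_one_div_nhdsLT (a : ℝ) :
    Tendsto (fun k : ℕ => ((⌈a * (k + 1)⌉ : ℝ) - 1) / (k + 1)) atTop (𝓝[<] a) := by
  have hlt : ∀ k : ℕ, ((⌈a * (k + 1)⌉ : ℝ) - 1) / (k + 1) < a := fun k => by
    rw [div_lt_iff₀ (by positivity)]
    linarith [Int.ceil_lt_add_one (a * (k + 1))]
  have hge : ∀ k : ℕ, a - 1 / ((k : ℝ) + 1) ≤ ((⌈a * (k + 1)⌉ : ℝ) - 1) / (k + 1) := fun k => by
    rw [le_div_iff₀ (by positivity), sub_mul, one_div_mul_cancel (by positivity)]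
    linarith [Int.le_ceil (a * (k + 1))]
  refine tendsto_nhdsWithin_of_tendsto_nhds_of_eventually_within _ ?_ (.of_forall hlt)
  refine tendsto_of_tendsto_of_tendsto_of_le_of_le ?_ tendsto_const_nhds hge (fun k => (hlt k).le)
  simpa using tendsto_const_nhds.sub (tendsto_one_div_add_atTop_nhds_zero_nat (𝕜 := ℝ))

theorem aemeasurable_of_tendsto_nhdsLT {β : Type*} [TopologicalSpace β] [MeasurableSpace β]
    [BorelSpace β] [PseudoMetrizableSpace β] {μ : Measure ℝ} {f : ℝ → β}
    (hf : ∀ᵐ a ∂μ, Tendsto f (𝓝[<] a) (𝓝 (f a))) : AEMeasurable f μ := by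
  -- the `k`-th approximant is constant on each interval `((j - 1) / (k + 1), j / (k + 1)]`
  refine aemeasurable_of_tendsto_metrizable_ae atTop
    (f := fun (k : ℕ) (a : ℝ) => f (((⌈a * (k + 1)⌉ : ℝ) - 1) / (k + 1))) (fun k => ?_) ?_
  · have : Measurable fun a : ℝ => ⌈a * (k + 1)⌉ := Int.measurable_ceil.comp (by fun_prop)
    exact ((measurable_of_countable fun j : ℤ => f ((j - 1) / (k + 1))).comp this).aemeasurable
  · filter_upwards [hf] with a ha using ha.comp (tendsto_ceil_sub_one_div_nhdsLT a)

theorem acut_anti {m : ℕ} (u : Em m → ℝ) : Antitone (acut u) := fun _ _ hab _ hx => hab.trans hx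

namespace IsFuzzyBp

variable {m : ℕ} {p q : ℝ} {u v : Em m → ℝ} {a : ℝ}

theorem acut_nonempty (hu : IsFuzzyBp p u) (ha : a ∈ Ioc (0 : ℝ) 1) : (acut u a).Nonempty :=
  hu.normal.imp fun x hx => by simp [acut, hx, ha.2]

def cut (hu : IsFuzzyBp p u) (ha : a ∈ Ioc (0 : ℝ) 1) : NonemptyCompacts (Em m) :=
  ⟨⟨acut u a, hu.compactCuts a ha⟩, hu.acut_nonempty ha⟩

theorem dist_cut (hu : IsFuzzyBp p u) (hv : IsFuzzyBp q v) {b : ℝ} (ha : a ∈ Ioc (0 : ℝ) 1)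
    (hb : b ∈ Ioc (0 : ℝ) 1) : dist (hu.cut ha) (hv.cut hb) = hausdorffDist (acut u a) (acut v b) :=
  rfl

theorem tendsto_hausdorffDist_acut_nhdsLT (hu : IsFuzzyBp p u) (ha : a ∈ Ioc (0 : ℝ) 1) :
    Tendsto (fun b => hausdorffDist (acut u b) (acut u a)) (𝓝[<] a) (𝓝 0) := by
  refine Metric.tendsto_nhds.2 fun ε hε => ?_
  have : Nonempty (Ioo 0 a) := ⟨⟨a / 2, half_pos ha.1, half_lt_self ha.1⟩⟩
  have hdir : Directed (· ⊇ ·) fun b : Ioo 0 a => acut u b :=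
    ((acut_anti u).comp_monotone (Subtype.mono_coe _)).directed_ge
  have hcpt (b : Ioo 0 a) : IsCompact (acut u b) := hu.compactCuts b ⟨b.2.1, b.2.2.le.trans ha.2⟩
  have hinter : ∀ x ∈ ⋂ b : Ioo 0 a, acut u b, thickening (ε / 2) (acut u a) ∈ 𝓝 x := by
    intro x hx
    refine isOpen_thickening.mem_nhds (self_subset_thickening (half_pos hε) _ ?_)
    refine le_of_forall_lt_imp_le_of_dense fun c hc => (le_max_left c (a / 2)).trans ?_
    exact mem_iInter.1 hx ⟨_, lt_max_of_lt_right (half_pos ha.1), max_lt hc (half_lt_self ha.1)⟩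
  obtain ⟨⟨b₀, hb₀⟩, hsub⟩ := exists_subset_nhds_of_isCompact hdir hcpt hinter
  filter_upwards [Ioo_mem_nhdsLT hb₀.2] with b hb
  rw [dist_zero_right, Real.norm_of_nonneg hausdorffDist_nonneg]
  refine (hausdorffDist_le_of_mem_dist (half_pos hε).le (fun x hx => ?_) fun y hy =>
    ⟨y, acut_anti u hb.2.le hy, by simpa using (half_pos hε).le⟩).trans_lt (half_lt_self hε)
  obtain ⟨z, hz, hxz⟩ := mem_thickening_iff.1 (hsub (acut_anti u hb.1.le hx))
  exact ⟨z, hz, hxz.le⟩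

theorem tendsto_hausdorffDist_acut_acut_nhdsLT (hu : IsFuzzyBp p u) (hv : IsFuzzyBp q v)
    (ha : a ∈ Ioc (0 : ℝ) 1) :
    Tendsto (fun b => hausdorffDist (acut u b) (acut v b)) (𝓝[<] a)
      (𝓝 (hausdorffDist (acut u a) (acut v a))) := by
  have hlim := (hu.tendsto_hausdorffDist_acut_nhdsLT ha).add
    (hv.tendsto_hausdorffDist_acut_nhdsLT ha)
  rw [zero_add] at hlim
  refine tendsto_iff_dist_tendsto_zero.2 (squeeze_zero' (.of_forall fun _ => dist_nonneg) ?_ hlim)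
  filter_upwards [Ioo_mem_nhdsLT ha.1] with b hb
  have hb' : b ∈ Ioc (0 : ℝ) 1 := ⟨hb.1, hb.2.le.trans ha.2⟩
  simpa only [dist_cut] using dist_dist_dist_le (hu.cut hb') (hv.cut hb') (hu.cut ha) (hv.cut ha)

theorem aemeasurable_hausdorffDist_acut (hu : IsFuzzyBp p u) (hv : IsFuzzyBp q v) :
    AEMeasurable (fun a => hausdorffDist (acut u a) (acut v a)) (volume.restrict (Ioc 0 1)) :=
  aemeasurable_of_tendsto_nhdsLT <| (ae_restrict_iff' measurableSet_Ioc).2 <|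
    .of_forall fun _ ha => hu.tendsto_hausdorffDist_acut_acut_nhdsLT hv ha

theorem hausdorffDist_acut_le (hu : IsFuzzyBp p u) (hv : IsFuzzyBp q v) (ha : a ∈ Ioc (0 : ℝ) 1) :
    hausdorffDist (acut u a) (acut v a) ≤
      hausdorffDist (acut u a) {0} + hausdorffDist (acut v a) {0} :=
  dist_triangle_right (hu.cut ha) (hv.cut ha) {0}

theorem integrableOn_hausdorffDist_acut_rpow (hu : IsFuzzyBp p u) (hv : IsFuzzyBp p v)
    (hp : 1 ≤ p) : IntegrableOn (fun a => hausdorffDist (acut u a) (acut v a) ^ p) (Ioc 0 1) := by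
  refine ((hu.lp.add hv.lp).const_mul (2 ^ (p - 1))).mono'
    ((hu.aemeasurable_hausdorffDist_acut hv).pow_const p).aestronglyMeasurable
    ((ae_restrict_iff' measurableSet_Ioc).2 (.of_forall fun a ha => ?_))
  rw [Real.norm_of_nonneg (Real.rpow_nonneg hausdorffDist_nonneg p)]
  calc hausdorffDist (acut u a) (acut v a) ^ p
      ≤ (hausdorffDist (acut u a) {0} + hausdorffDist (acut v a) {0}) ^ p :=
        Real.rpow_le_rpow hausdorffDist_nonneg (hu.hausdorffDist_acut_le hv ha) (by linarith)
    _ ≤ _ := Real.rpow_add_le_mul_rpow_add_rpow hausdorffDist_nonneg hausdorffDist_nonneg hp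

theorem eLpNorm_hausdorffDist_acut_eq_dp (hu : IsFuzzyBp p u) (hv : IsFuzzyBp p v) (hp : 1 ≤ p) :
    eLpNorm (fun a => hausdorffDist (acut u a) (acut v a)) (.ofReal p) (volume.restrict (Ioc 0 1)) =
      .ofReal (dp p u v) := by
  have hp0 : 0 < p := by linarith
  have hmem : MemLp (fun a => hausdorffDist (acut u a) (acut v a)) (.ofReal p)
      (volume.restrict (Ioc 0 1)) := by
    refine (integrable_norm_rpow_iff (hu.aemeasurable_hausdorffDist_acut hv).aestronglyMeasurable
      (by simpa using hp0) ENNReal.ofReal_ne_top).1 ?_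
    simp only [ENNReal.toReal_ofReal hp0.le, Real.norm_of_nonneg hausdorffDist_nonneg]
    exact hu.integrableOn_hausdorffDist_acut_rpow hv hp
  rw [hmem.eLpNorm_eq_integral_rpow_norm (by simpa using hp0) ENNReal.ofReal_ne_top]
  simp [dp, ENNReal.toReal_ofReal hp0.le, Real.norm_of_nonneg hausdorffDist_nonneg]

end IsFuzzyBp

theorem exists_subseq_ae_tendsto_hausdorffDist_acut {m : ℕ} {p : ℝ} (hp : 1 ≤ p)
    {u : ℕ → Em m → ℝ} {v : Em m → ℝ} (hu : ∀ n, IsFuzzyBp p (u n)) (hv : IsFuzzyBp p v)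
    (h : Tendsto (fun n => dp p (u n) v) atTop (𝓝 0)) :
    ∃ ns : ℕ → ℕ, ∀ᵐ a ∂volume.restrict (Ioc (0 : ℝ) 1),
      Tendsto (fun i => hausdorffDist (acut (u (ns i)) a) (acut v a)) atTop (𝓝 0) := by
  have hLp : Tendsto (fun n => eLpNorm ((fun a => hausdorffDist (acut (u n) a) (acut v a)) - 0)
      (.ofReal p) (volume.restrict (Ioc 0 1))) atTop (𝓝 0) := by
    simp_rw [sub_zero, (hu _).eLpNorm_hausdorffDist_acut_eq_dp hv hp]
    simpa using ENNReal.tendsto_ofReal h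
  obtain ⟨ns, -, hns⟩ := (tendstoInMeasure_of_tendsto_eLpNorm
    (ENNReal.ofReal_pos.2 (by linarith)).ne'
    (fun n => ((hu n).aemeasurable_hausdorffDist_acut hv).aestronglyMeasurable)
    aestronglyMeasurable_zero hLp).exists_seq_tendsto_ae
  exact ⟨ns, hns⟩

theorem convex_acut_of_tendsto_hausdorffDist {m : ℕ} {p q a : ℝ} {u : ℕ → Em m → ℝ}
    {v : Em m → ℝ} (hu : ∀ n, IsFuzzyBp p (u n)) (huconv : ∀ n, Convex ℝ (acut (u n) a))
    (hv : IsFuzzyBp q v) (ha : a ∈ Ioc (0 : ℝ) 1)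
    (h : Tendsto (fun n => hausdorffDist (acut (u n) a) (acut v a)) atTop (𝓝 0)) :
    Convex ℝ (acut v a) := by
  have hlim : Tendsto (fun n => (hu n).cut ha) atTop (𝓝 (hv.cut ha)) :=
    tendsto_iff_dist_tendsto_zero.2 (by simpa only [IsFuzzyBp.dist_cut] using h)
  exact NonemptyCompacts.isClosed_setOf_convex.mem_of_tendsto hlim (.of_forall huconv)

theorem convex_acut_of_ae_convex {m : ℕ} {v : Em m → ℝ}
    (h : ∀ᵐ b ∂volume.restrict (Ioc (0 : ℝ) 1), Convex ℝ (acut v b)) {a : ℝ}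
    (ha : a ∈ Ioc (0 : ℝ) 1) : Convex ℝ (acut v a) := by
  intro x hx y hy s t hs ht hst
  by_contra hlt
  have hc : max (v (s • x + t • y)) 0 < a := max_lt (not_le.1 hlt) ha.1
  obtain ⟨b, hb, hconv⟩ := Measure.exists_mem_of_measure_ne_zero_of_ae
    (s := Ioo (max (v (s • x + t • y)) 0) a) (by simpa [Real.volume_Ioo] using hc)
    (ae_restrict_of_ae_restrict_of_subset
      (Ioo_subset_Ioc_self.trans (Ioc_subset_Ioc (le_max_right _ _) ha.2)) h)
  have hb_le : b ≤ v (s • x + t • y) :=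
    hconv (acut_anti v hb.2.le hx) (acut_anti v hb.2.le hy) hs ht hst
  exact ((le_max_left _ _).trans_lt hb.1).not_ge hb_le

/-- `E^{m,p}` is closed in `(F_B(ℝ^m)^p, d_p)`: a `d_p`-limit of
fuzzy sets with convex cuts has convex cuts. -/
theorem fuzzy_numbers_Lp_closed {m : ℕ} (p : ℝ) (hp : 1 ≤ p)
    (u : ℕ → Em m → ℝ) (v : Em m → ℝ)
    (hu : ∀ n, IsFuzzyBp p (u n))
    (huconv : ∀ n, ∀ a ∈ Ioc (0:ℝ) 1, Convex ℝ (acut (u n) a))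
    (hv : IsFuzzyBp p v)
    (h : Tendsto (fun n => dp p (u n) v) atTop (nhds 0)) :
    ∀ a ∈ Ioc (0:ℝ) 1, Convex ℝ (acut v a) := by
  obtain ⟨ns, hns⟩ := exists_subseq_ae_tendsto_hausdorffDist_acut hp hu hv h
  refine fun a ha => convex_acut_of_ae_convex ?_ ha
  filter_upwards [hns, ae_restrict_mem measurableSet_Ioc] with b hb hbI
  exact convex_acut_of_tendsto_hausdorffDist (fun i => hu (ns i)) (fun i => huconv (ns i) b hbI)
    hv hbI hb

end
end

section
/- (E^{m,p}, d_p) is the completion of the space of fuzzy numbers (E^m, d_p): it is complete and E^m is dense in it. -/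
open Metric Set MeasureTheory Filter

noncomputable section

section AuxLemmas

open TopologicalSpace

variable {m : ℕ}

lemma acut_mono (u : Em m → ℝ) {a b : ℝ} (h : a ≤ b) : acut u b ⊆ acut u a :=
  fun _ hx => le_trans h hx

lemma acut_nonempty {u : Em m → ℝ} (hn : ∃ x, u x = 1) {a : ℝ} (ha : a ≤ 1) :
    (acut u a).Nonempty := by
  obtain ⟨x, hx⟩ := hn
  exact ⟨x, by simp [acut, hx, ha]⟩

lemma hEdist_ne_top {A B : Set (Em m)} (hA : IsCompact A) (hB : IsCompact B)
    (hAne : A.Nonempty) (hBne : B.Nonempty) : EMetric.hausdorffEdist A B ≠ ⊤ :=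
  Metric.hausdorffEdist_ne_top_of_nonempty_of_bounded hAne hBne hA.isBounded hB.isBounded

lemma hdistZ_mono {A B : Set (Em m)} (hBA : B ⊆ A) (hA : IsCompact A) :
    hausdorffDist B ({0} : Set (Em m)) ≤ hausdorffDist A ({0} : Set (Em m)) := by
  rcases B.eq_empty_or_nonempty with rfl | hBne
  · rw [hausdorffDist_empty']
    exact hausdorffDist_nonneg
  · have hAne : A.Nonempty := hBne.mono hBA
    have fin : EMetric.hausdorffEdist A ({0} : Set (Em m)) ≠ ⊤ :=
      hEdist_ne_top hA isCompact_singleton hAne (singleton_nonempty _)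
    refine hausdorffDist_le_of_mem_dist hausdorffDist_nonneg ?_ ?_
    · intro x hx
      refine ⟨0, Set.mem_singleton _, ?_⟩
      have h2 := infDist_le_hausdorffDist_of_mem (hBA hx) fin
      rwa [infDist_singleton] at h2
    · rintro y hy
      rw [Set.mem_singleton_iff] at hy
      subst hy
      obtain ⟨x, hx⟩ := hBne
      refine ⟨x, hx, ?_⟩
      have h2 := infDist_le_hausdorffDist_of_mem (hBA hx) fin
      rw [infDist_singleton] at h2
      rwa [dist_comm]

lemma acut_eq_iInter {u : Em m → ℝ} {c a : ℝ} (hc : 0 ≤ c) (hca : c < a) :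
    acut u a = ⋂ b ∈ Ioo c a, acut u b := by
  ext x
  simp only [Set.mem_iInter, acut, Set.mem_setOf_eq, Set.mem_Ioo]
  constructor
  · intro h b hb
    exact le_trans hb.2.le h
  · intro h
    by_contra hlt
    push_neg at hlt
    set M := max c (u x) with hM
    have hMa : M < a := max_lt hca hlt
    have hMc : c ≤ M := le_max_left _ _
    have hMu : u x ≤ M := le_max_right _ _
    have hb := h ((M + a)/2) ⟨by linarith, by linarith⟩
    linarith

lemma cuts_left_approx {u : Em m → ℝ} (hcomp : ∀ a ∈ Ioc (0:ℝ) 1, IsCompact (acut u a))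
    (hn : ∃ x, u x = 1) {a : ℝ} (ha : a ∈ Ioc (0:ℝ) 1) {ε : ℝ} (hε : 0 < ε) :
    ∃ b₀ ∈ Ioo (0:ℝ) a, ∀ b, b₀ ≤ b → b < a →
      hausdorffDist (acut u b) (acut u a) ≤ ε := by
  have ha0 : (0:ℝ) < a := ha.1
  have hT : acut u a = ⋂ b ∈ Ioo (a/2) a, acut u b := acut_eq_iInter (by linarith) (by linarith)
  have hmem : ∀ b : ℝ, b ∈ Ioo (a/2) a → b ∈ Ioc (0:ℝ) 1 := by
    intro b hb
    exact ⟨lt_trans (by linarith) hb.1, le_trans hb.2.le ha.2⟩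
  by_cases hempty : ∃ b ∈ Ioo (a/2) a, acut u b \ thickening ε (acut u a) = ∅
  · obtain ⟨b₀, hb₀, hC⟩ := hempty
    refine ⟨b₀, ⟨lt_trans (by linarith) hb₀.1, hb₀.2⟩, ?_⟩
    intro b hb hba
    have hsub : acut u b ⊆ thickening ε (acut u a) := by
      intro x hx
      have hx0 : x ∈ acut u b₀ := acut_mono u hb hx
      by_cases h : x ∈ thickening ε (acut u a)
      · exact h
      · exact absurd (hC ▸ (Set.mem_diff x).2 ⟨hx0, h⟩) (Set.notMem_empty x)
    refine hausdorffDist_le_of_mem_dist hε.le ?_ ?_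
    · intro x hx
      obtain ⟨y, hy, hxy⟩ := mem_thickening_iff.1 (hsub hx)
      exact ⟨y, hy, hxy.le⟩
    · intro y hy
      exact ⟨y, acut_mono u hba.le hy, by simp [hε.le]⟩
  · exfalso
    push_neg at hempty
    have hι : Nonempty (↥(Ioo (a/2) a)) := ⟨⟨3*a/4, by constructor <;> [linarith; linarith]⟩⟩
    have key := IsCompact.nonempty_iInter_of_directed_nonempty_isCompact_isClosed
      (t := fun b : ↥(Ioo (a/2) a) => acut u ↑b \ thickening ε (acut u a))
      (fun b₁ b₂ => by
        rcases le_total (b₁:ℝ) b₂ with h | h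
        · exact ⟨⟨b₂, b₂.2⟩, Set.diff_subset_diff_left (acut_mono u h), subset_rfl⟩
        · exact ⟨⟨b₁, b₁.2⟩, subset_rfl, Set.diff_subset_diff_left (acut_mono u h)⟩)
      (fun b => hempty b b.2)
      (fun b => ((hcomp b (hmem b b.2)).inter_right (isOpen_thickening).isClosed_compl))
      (fun b => ((hcomp b (hmem b b.2)).isClosed.inter (isOpen_thickening).isClosed_compl))
    obtain ⟨x, hx⟩ := key
    simp only [Set.mem_iInter, Set.mem_diff] at hx
    have hxa : x ∈ acut u a := by
      rw [hT]
      exact Set.mem_iInter₂.2 (fun b hb => (hx ⟨b, hb⟩).1)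
    exact (hx (Classical.arbitrary _)).2 (self_subset_thickening hε _ hxa)

end AuxLemmas
section AuxLemmas2

variable {m : ℕ}

lemma hdist_triangle4 {A A' B B' : Set (Em m)} (hA : IsCompact A) (hA' : IsCompact A')
    (hB : IsCompact B) (hB' : IsCompact B') (hAne : A.Nonempty) (hA'ne : A'.Nonempty)
    (hBne : B.Nonempty) (hB'ne : B'.Nonempty) :
    |hausdorffDist A B - hausdorffDist A' B'| ≤ hausdorffDist A A' + hausdorffDist B B' := by
  have t1 : hausdorffDist A B ≤ hausdorffDist A A' + hausdorffDist A' B :=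
    hausdorffDist_triangle (hEdist_ne_top hA hA' hAne hA'ne)
  have t2 : hausdorffDist A' B ≤ hausdorffDist A' B' + hausdorffDist B' B :=
    hausdorffDist_triangle (hEdist_ne_top hA' hB' hA'ne hB'ne)
  have t3 : hausdorffDist A' B' ≤ hausdorffDist A' A + hausdorffDist A B' :=
    hausdorffDist_triangle (hEdist_ne_top hA' hA hA'ne hAne)
  have t4 : hausdorffDist A B' ≤ hausdorffDist A B + hausdorffDist B B' :=
    hausdorffDist_triangle (hEdist_ne_top hA hB hAne hBne)
  have c1 : hausdorffDist B' B = hausdorffDist B B' := hausdorffDist_comm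
  have c2 : hausdorffDist A' A = hausdorffDist A A' := hausdorffDist_comm
  rw [abs_sub_le_iff]
  constructor <;> linarith

lemma aemeasurable_of_leftCont (f : ℝ → ℝ)
    (h : ∀ a ∈ Ioc (0:ℝ) 1, ∀ ε : ℝ, 0 < ε →
      ∃ b₀ ∈ Ioo (0:ℝ) a, ∀ b, b₀ ≤ b → b < a → |f b - f a| ≤ ε) :
    AEMeasurable f (volume.restrict (Ioc (0:ℝ) 1)) := by
  have hmeas : ∀ n : ℕ, Measurable (fun a : ℝ => f (((⌈a * 2^n⌉ - 1 : ℤ) : ℝ) / 2^n)) := by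
    intro n
    have h1 : Measurable (fun a : ℝ => (⌈a * (2:ℝ)^n⌉ : ℤ)) := (measurable_id.mul_const _).ceil
    exact (measurable_of_countable (fun z : ℤ => f (((z - 1 : ℤ) : ℝ) / 2^n))).comp h1
  refine aemeasurable_of_tendsto_metrizable_ae atTop (fun n => (hmeas n).aemeasurable) ?_
  rw [ae_restrict_iff' measurableSet_Ioc]
  refine ae_of_all _ (fun a ha => ?_)
  rw [Metric.tendsto_atTop]
  intro ε hε
  obtain ⟨b₀, hb₀, hb⟩ := h a ha (ε/2) (half_pos hε)
  obtain ⟨N, hN⟩ : ∃ N : ℕ, ((1:ℝ)/2) ^ N < a - b₀ := by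
    refine exists_pow_lt_of_lt_one (by linarith [hb₀.2]) (by norm_num)
  refine ⟨N, fun n hn => ?_⟩
  set c : ℝ := ((⌈a * 2^n⌉ - 1 : ℤ) : ℝ) / 2^n with hc
  have h2n : (0:ℝ) < 2^n := by positivity
  have hca : c < a := by
    rw [hc, div_lt_iff₀ h2n]
    push_cast
    have := Int.ceil_lt_add_one (a * 2^n)
    linarith
  have hcb : b₀ ≤ c := by
    have h3 : ((1:ℝ)/2) ^ n ≤ ((1:ℝ)/2) ^ N := by
      apply pow_le_pow_of_le_one (by norm_num) (by norm_num) hn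
    have h4 : a - ((1:ℝ)/2)^n ≤ c := by
      rw [hc, le_div_iff₀ h2n]
      have h5 := Int.le_ceil (a * 2^n)
      have h6 : ((1:ℝ)/2)^n * 2^n = 1 := by
        rw [div_pow, one_pow]; field_simp
      push_cast
      nlinarith
    nlinarith
  have := hb c hcb hca
  rw [Real.dist_eq]
  calc |f c - f a| ≤ ε/2 := this
    _ < ε := by linarith

lemma aemeas_hdist {u w : Em m → ℝ}
    (hcu : ∀ a ∈ Ioc (0:ℝ) 1, IsCompact (acut u a)) (hnu : ∃ x, u x = 1)
    (hcw : ∀ a ∈ Ioc (0:ℝ) 1, IsCompact (acut w a)) (hnw : ∃ x, w x = 1) :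
    AEMeasurable (fun a => hausdorffDist (acut u a) (acut w a))
      (volume.restrict (Ioc (0:ℝ) 1)) := by
  apply aemeasurable_of_leftCont
  intro a ha ε hε
  obtain ⟨b₁, hb₁, hu1⟩ := cuts_left_approx hcu hnu ha (half_pos hε)
  obtain ⟨b₂, hb₂, hw1⟩ := cuts_left_approx hcw hnw ha (half_pos hε)
  refine ⟨max b₁ b₂, ⟨lt_max_of_lt_left hb₁.1, max_lt hb₁.2 hb₂.2⟩, ?_⟩
  intro b hb hba
  have hbI : b ∈ Ioc (0:ℝ) 1 :=
    ⟨lt_of_lt_of_le hb₁.1 (le_trans (le_max_left _ _) hb), le_trans hba.le ha.2⟩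
  have habs := hdist_triangle4 (hcu b hbI) (hcu a ha) (hcw b hbI) (hcw a ha)
      (acut_nonempty hnu hbI.2) (acut_nonempty hnu ha.2)
      (acut_nonempty hnw hbI.2) (acut_nonempty hnw ha.2)
  have h1 := hu1 b (le_trans (le_max_left _ _) hb) hba
  have h2 := hw1 b (le_trans (le_max_right _ _) hb) hba
  calc |hausdorffDist (acut u b) (acut w b) - hausdorffDist (acut u a) (acut w a)|
      ≤ hausdorffDist (acut u b) (acut u a) + hausdorffDist (acut w b) (acut w a) := habs
    _ ≤ ε := by linarith

lemma rpow_add_le' {x y q : ℝ} (hx : 0 ≤ x) (hy : 0 ≤ y) (hq : 0 ≤ q) :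
    (x + y) ^ q ≤ 2 ^ q * (x ^ q + y ^ q) := by
  have h4 : (0:ℝ) < 2 ^ q := Real.rpow_pos_of_pos (by norm_num) _
  rcases le_total x y with h | h
  · have h1 : (x + y) ^ q ≤ (2*y) ^ q := Real.rpow_le_rpow (by linarith) (by linarith) hq
    have h2 : (2*y:ℝ) ^ q = 2 ^ q * y ^ q := Real.mul_rpow (by norm_num) hy
    have h3 : (0:ℝ) ≤ x ^ q := Real.rpow_nonneg hx _
    nlinarith
  · have h1 : (x + y) ^ q ≤ (2*x) ^ q := Real.rpow_le_rpow (by linarith) (by linarith) hq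
    have h2 : (2*x:ℝ) ^ q = 2 ^ q * x ^ q := Real.mul_rpow (by norm_num) hx
    have h3 : (0:ℝ) ≤ y ^ q := Real.rpow_nonneg hy _
    nlinarith

lemma hdist_le_sum_zero {A B : Set (Em m)} (hA : IsCompact A) (hB : IsCompact B)
    (hAne : A.Nonempty) (hBne : B.Nonempty) :
    hausdorffDist A B ≤ hausdorffDist A ({0} : Set (Em m)) + hausdorffDist B ({0} : Set (Em m)) := by
  have t := hausdorffDist_triangle
    (hEdist_ne_top hA isCompact_singleton hAne (singleton_nonempty (0 : Em m)))
    (t := ({0} : Set (Em m))) (u := B)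
  calc hausdorffDist A B ≤ hausdorffDist A {0} + hausdorffDist ({0} : Set (Em m)) B := t
    _ = hausdorffDist A {0} + hausdorffDist B {0} := by rw [hausdorffDist_comm (s := ({0} : Set (Em m)))]

lemma integrableOn_hdist_pow {q : ℝ} (hq : 1 ≤ q) {u w : Em m → ℝ}
    (hu : IsFuzzyBp q u) (hw : IsFuzzyBp q w) :
    IntegrableOn (fun a => hausdorffDist (acut u a) (acut w a) ^ q) (Ioc (0:ℝ) 1) := by
  have hq0 : (0:ℝ) < q := lt_of_lt_of_le one_pos hq
  have hmeas := aemeas_hdist hu.compactCuts hu.normal hw.compactCuts hw.normal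
  have hcont : Continuous (fun x : ℝ => x ^ q) := Real.continuous_rpow_const hq0.le
  have hmeasp : AEStronglyMeasurable (fun a => hausdorffDist (acut u a) (acut w a) ^ q)
      (volume.restrict (Ioc (0:ℝ) 1)) :=
    (hcont.measurable.comp_aemeasurable hmeas).aestronglyMeasurable
  have hg : IntegrableOn (fun a => (2:ℝ) ^ q *
      (hausdorffDist (acut u a) ({0} : Set (Em m)) ^ q
        + hausdorffDist (acut w a) ({0} : Set (Em m)) ^ q)) (Ioc (0:ℝ) 1) :=
    (hu.lp.add hw.lp).const_mul _
  refine hg.mono' hmeasp ?_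
  rw [ae_restrict_iff' measurableSet_Ioc]
  refine ae_of_all _ (fun a ha => ?_)
  have hAc := hu.compactCuts a ha
  have hBc := hw.compactCuts a ha
  have hAne := acut_nonempty hu.normal ha.2
  have hBne := acut_nonempty hw.normal ha.2
  have h1 := hdist_le_sum_zero hAc hBc hAne hBne
  rw [Real.norm_of_nonneg (Real.rpow_nonneg hausdorffDist_nonneg _)]
  calc hausdorffDist (acut u a) (acut w a) ^ q
      ≤ (hausdorffDist (acut u a) ({0} : Set (Em m))
          + hausdorffDist (acut w a) ({0} : Set (Em m))) ^ q :=
        Real.rpow_le_rpow hausdorffDist_nonneg h1 hq0.le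
    _ ≤ _ := rpow_add_le' hausdorffDist_nonneg hausdorffDist_nonneg hq0.le

lemma integral_lt_of_dp_lt {q : ℝ} (hq : 1 ≤ q) {u w : Em m → ℝ} {ε : ℝ} (hε : 0 < ε)
    (h : dp q u w < ε) :
    ∫ a in Ioc (0:ℝ) 1, hausdorffDist (acut u a) (acut w a) ^ q < ε ^ q := by
  have hq0 : (0:ℝ) < q := by linarith
  by_contra hcon
  push_neg at hcon
  unfold dp at h
  have h2 : (ε ^ q) ^ (1/q) ≤
      (∫ a in Ioc (0:ℝ) 1, hausdorffDist (acut u a) (acut w a) ^ q) ^ (1/q) :=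
    Real.rpow_le_rpow (Real.rpow_nonneg hε.le _) hcon (by positivity)
  have h3 : (ε ^ q) ^ (1/q) = ε := by
    rw [← Real.rpow_mul hε.le, mul_one_div_cancel hq0.ne', Real.rpow_one]
  rw [h3] at h2
  linarith

lemma dp_le_of_integral_le {q : ℝ} (hq0 : 0 < q) {u w : Em m → ℝ} {B : ℝ} (hB : 0 ≤ B)
    (h : ∫ a in Ioc (0:ℝ) 1, hausdorffDist (acut u a) (acut w a) ^ q ≤ B ^ q) :
    dp q u w ≤ B := by
  unfold dp
  have h0 : 0 ≤ ∫ a in Ioc (0:ℝ) 1, hausdorffDist (acut u a) (acut w a) ^ q :=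
    integral_nonneg (fun a => Real.rpow_nonneg hausdorffDist_nonneg _)
  calc (∫ a in Ioc (0:ℝ) 1, hausdorffDist (acut u a) (acut w a) ^ q) ^ (1/q)
      ≤ (B ^ q) ^ (1/q) := Real.rpow_le_rpow h0 h (by positivity)
    _ = B := by rw [← Real.rpow_mul hB, mul_one_div_cancel hq0.ne', Real.rpow_one]

lemma dp_nonneg {q : ℝ} {u w : Em m → ℝ} : 0 ≤ dp q u w := by
  unfold dp
  exact Real.rpow_nonneg (integral_nonneg (fun a => Real.rpow_nonneg hausdorffDist_nonneg _)) _

end AuxLemmas2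
section AuxLemmas3

open TopologicalSpace Topology

variable {m : ℕ}

lemma infDist_tendsto_of_tendsto {S : ℕ → NonemptyCompacts (Em m)} {L : NonemptyCompacts (Em m)}
    (hS : Tendsto S atTop (𝓝 L)) (x : Em m) :
    Tendsto (fun k => infDist x (S k : Set (Em m))) atTop (𝓝 (infDist x (L : Set (Em m)))) :=
  ((lipschitz_infDist_set x).continuous.tendsto L).comp hS

lemma mem_of_infDist_nonpos {L : NonemptyCompacts (Em m)} {x : Em m}
    (h : infDist x (L : Set (Em m)) ≤ 0) : x ∈ (L : Set (Em m)) := by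
  have h0 : infDist x (L : Set (Em m)) = 0 := le_antisymm h infDist_nonneg
  exact (L.isCompact.isClosed.mem_iff_infDist_zero L.nonempty).2 h0

lemma infDist_le_dist_of_mem_lim {S L : NonemptyCompacts (Em m)} {x : Em m}
    (hx : x ∈ (L : Set (Em m))) : infDist x (S : Set (Em m)) ≤ dist S L := by
  have h1 := (lipschitz_infDist_set x).dist_le_mul S L
  have h2 : infDist x (L : Set (Em m)) = 0 := infDist_zero_of_mem hx
  rw [Real.dist_eq, h2, sub_zero, NNReal.coe_one, one_mul] at h1
  exact le_trans (le_abs_self _) h1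

lemma subset_of_lim {S T : ℕ → NonemptyCompacts (Em m)} {LS LT : NonemptyCompacts (Em m)}
    (hST : ∀ k, (S k : Set (Em m)) ⊆ (T k : Set (Em m)))
    (hS : Tendsto S atTop (𝓝 LS)) (hT : Tendsto T atTop (𝓝 LT)) :
    (LS : Set (Em m)) ⊆ (LT : Set (Em m)) := by
  intro x hx
  apply mem_of_infDist_nonpos
  have h2 := infDist_tendsto_of_tendsto hT x
  have h3 : ∀ k, infDist x (T k : Set (Em m)) ≤ dist (S k) LS := fun k =>
    le_trans (infDist_le_infDist_of_subset (hST k) (S k).nonempty)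
      (infDist_le_dist_of_mem_lim hx)
  have h4 : Tendsto (fun k => dist (S k) LS) atTop (𝓝 0) :=
    tendsto_iff_dist_tendsto_zero.1 hS
  exact le_of_tendsto_of_tendsto h2 h4 (Eventually.of_forall h3)

lemma convex_of_lim {S : ℕ → NonemptyCompacts (Em m)} {L : NonemptyCompacts (Em m)}
    (hconv : ∀ k, Convex ℝ (S k : Set (Em m))) (hS : Tendsto S atTop (𝓝 L)) :
    Convex ℝ (L : Set (Em m)) := by
  intro x hx y hy t s ht hs hts
  apply mem_of_infDist_nonpos
  have key : ∀ k : ℕ, infDist (t • x + s • y) (L : Set (Em m)) ≤ 2 * dist (S k) L := by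
    intro k
    obtain ⟨xk, hxk, hdxk⟩ := (S k).isCompact.exists_infDist_eq_dist (S k).nonempty x
    obtain ⟨yk, hyk, hdyk⟩ := (S k).isCompact.exists_infDist_eq_dist (S k).nonempty y
    have hzk : t • xk + s • yk ∈ (S k : Set (Em m)) := hconv k hxk hyk ht hs hts
    have hfin : EMetric.hausdorffEdist ((S k) : Set (Em m)) (L : Set (Em m)) ≠ ⊤ :=
      hEdist_ne_top (S k).isCompact L.isCompact (S k).nonempty L.nonempty
    have h1 : infDist (t • x + s • y) (L : Set (Em m)) ≤
        infDist (t • xk + s • yk) (L : Set (Em m)) + dist (t • x + s • y) (t • xk + s • yk) :=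
      infDist_le_infDist_add_dist
    have h2 : infDist (t • xk + s • yk) (L : Set (Em m)) ≤
        hausdorffDist ((S k) : Set (Em m)) (L : Set (Em m)) :=
      infDist_le_hausdorffDist_of_mem hzk hfin
    have h3 : dist (t • x + s • y) (t • xk + s • yk) ≤ t * dist x xk + s * dist y yk := by
      have he : t • x + s • y - (t • xk + s • yk) = t • (x - xk) + s • (y - yk) := by
        rw [smul_sub, smul_sub]; abel
      rw [dist_eq_norm, he]
      calc ‖t • (x - xk) + s • (y - yk)‖ ≤ ‖t • (x - xk)‖ + ‖s • (y - yk)‖ := norm_add_le _ _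
        _ = t * ‖x - xk‖ + s * ‖y - yk‖ := by
            rw [norm_smul, norm_smul, Real.norm_of_nonneg ht, Real.norm_of_nonneg hs]
        _ = t * dist x xk + s * dist y yk := by rw [dist_eq_norm, dist_eq_norm]
    have h4 : dist x xk ≤ dist (S k) L := hdxk ▸ infDist_le_dist_of_mem_lim hx
    have h5 : dist y yk ≤ dist (S k) L := hdyk ▸ infDist_le_dist_of_mem_lim hy
    have h6 : hausdorffDist ((S k) : Set (Em m)) (L : Set (Em m)) = dist (S k) L :=
      (NonemptyCompacts.dist_eq).symm
    have ht4 : t * dist x xk ≤ t * dist (S k) L := mul_le_mul_of_nonneg_left h4 ht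
    have hs5 : s * dist y yk ≤ s * dist (S k) L := mul_le_mul_of_nonneg_left h5 hs
    have hd0 : (0:ℝ) ≤ dist (S k) L := dist_nonneg
    nlinarith [h1, h2, h3]
  have h4 : Tendsto (fun k => 2 * dist (S k) L) atTop (𝓝 (2 * 0)) :=
    (tendsto_iff_dist_tendsto_zero.1 hS).const_mul 2
  rw [mul_zero] at h4
  exact le_of_tendsto_of_tendsto tendsto_const_nhds h4 (Eventually.of_forall key)

end AuxLemmas3
section AuxLemmas4

open TopologicalSpace Topology

variable {m : ℕ}

lemma hdist_tendsto_snd {S : Set (Em m)} (hS : IsCompact S) (hSne : S.Nonempty)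
    {Tk : ℕ → NonemptyCompacts (Em m)} {L : NonemptyCompacts (Em m)}
    (h : Tendsto Tk atTop (𝓝 L)) :
    Tendsto (fun k => hausdorffDist S (Tk k : Set (Em m))) atTop
      (𝓝 (hausdorffDist S (L : Set (Em m)))) := by
  have key : ∀ k, |hausdorffDist S (Tk k : Set (Em m)) - hausdorffDist S (L : Set (Em m))| ≤
      dist (Tk k) L := by
    intro k
    have h4 := hdist_triangle4 hS hS (Tk k).isCompact L.isCompact hSne hSne
      (Tk k).nonempty L.nonempty
    rw [hausdorffDist_self_zero] at h4
    calc |hausdorffDist S (Tk k : Set (Em m)) - hausdorffDist S (L : Set (Em m))|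
        ≤ 0 + hausdorffDist ((Tk k : Set (Em m))) (L : Set (Em m)) := h4
      _ = dist (Tk k) L := by rw [zero_add, ← NonemptyCompacts.dist_eq]
  rw [tendsto_iff_dist_tendsto_zero]
  have hdz : Tendsto (fun k => dist (Tk k) L) atTop (𝓝 0) := tendsto_iff_dist_tendsto_zero.1 h
  apply squeeze_zero (fun k => dist_nonneg) _ hdz
  intro k
  rw [Real.dist_eq]
  exact key k

lemma tendsto_dist_Z0 {Tk : ℕ → NonemptyCompacts (Em m)} {L Z : NonemptyCompacts (Em m)}
    (h : Tendsto Tk atTop (𝓝 L)) :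
    Tendsto (fun k => dist (Tk k) Z) atTop (𝓝 (dist L Z)) :=
  (continuous_id.dist continuous_const).continuousAt.tendsto.comp h

end AuxLemmas4
section Part2

open Topology

lemma density_part {m : ℕ} {p : ℝ} (hp : 1 ≤ p) (u : Em m → ℝ)
    (hu : IsFuzzyBp p u ∧ ∀ a ∈ Ioc (0:ℝ) 1, Convex ℝ (acut u a)) :
    ∀ ε > (0:ℝ), ∃ v : Em m → ℝ,
      (IsFuzzyB v ∧ ∀ a ∈ Ioc (0:ℝ) 1, Convex ℝ (acut v a)) ∧ dp p v u < ε := by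
  obtain ⟨hufz, hucv⟩ := hu
  intro ε hε
  have hp0 : (0:ℝ) < p := lt_of_lt_of_le one_pos hp
  set G : ℝ → ℝ := fun a => 2 ^ p * hausdorffDist (acut u a) ({0} : Set (Em m)) ^ p with hG
  have hGnn : ∀ a, 0 ≤ G a := fun a =>
    mul_nonneg (Real.rpow_nonneg (by norm_num) _) (Real.rpow_nonneg hausdorffDist_nonneg _)
  have hGint : IntegrableOn G (Ioc (0:ℝ) 1) := hufz.lp.const_mul _
  set F : ℕ → ℝ → ℝ := fun n => (Ioo (0:ℝ) (1/(n+1))).indicator G with hF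
  have hFint : ∀ n, Integrable (F n) (volume.restrict (Ioc (0:ℝ) 1)) := fun n =>
    hGint.indicator measurableSet_Ioo
  have hFnn : ∀ n a, 0 ≤ F n a := fun n a => indicator_nonneg (fun x _ => hGnn x) a
  have htend : Tendsto (fun n => ∫ a in Ioc (0:ℝ) 1, F n a) atTop
      (𝓝 (∫ _ in Ioc (0:ℝ) 1, (0:ℝ))) := by
    apply tendsto_integral_of_dominated_convergence (fun a => |G a|)
    · exact fun n => (hFint n).aestronglyMeasurable
    · exact hGint.abs
    · intro n
      refine ae_of_all _ fun a => ?_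
      by_cases hmem : a ∈ Ioo (0:ℝ) (1/(n+1))
      · simp only [hF, indicator_of_mem hmem, Real.norm_eq_abs]; exact le_rfl
      · simp only [hF, indicator_of_notMem hmem, norm_zero, abs_nonneg]
    · refine ae_of_all _ fun a => ?_
      rcases le_or_gt a 0 with ha | ha
      · have : ∀ n : ℕ, F n a = 0 := fun n =>
          indicator_of_notMem (fun hmem => absurd hmem.1 (not_lt.2 ha)) _
        simpa [this] using tendsto_const_nhds
      · obtain ⟨N, hN⟩ := exists_nat_one_div_lt ha
        have hev : ∀ᶠ n : ℕ in atTop, F n a = (0:ℝ) := by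
          rw [eventually_atTop]
          refine ⟨N, fun n hn => ?_⟩
          apply indicator_of_notMem
          intro hmem
          have h1 : (1:ℝ)/(n+1) ≤ 1/(N+1) := by
            apply one_div_le_one_div_of_le (by positivity)
            have : (N:ℝ) ≤ (n:ℝ) := Nat.cast_le.mpr hn
            linarith
          have h2 := hmem.2
          linarith
        exact Tendsto.congr' (hev.mono fun n h => h.symm) tendsto_const_nhds
  rw [integral_zero] at htend
  have hpos : (0:ℝ) < ε ^ p := Real.rpow_pos_of_pos hε _
  obtain ⟨n₀, hn₀⟩ := ((tendsto_order.1 htend).2 (ε ^ p) hpos).exists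
  set hh : ℝ := 1/(n₀+1) with hhh
  have hh0 : (0:ℝ) < hh := by positivity
  have hh1 : hh ≤ 1 := by
    rw [hhh]
    rw [div_le_one (by positivity)]
    push_cast; linarith [Nat.cast_nonneg n₀ (α := ℝ)]
  have hhI : hh ∈ Ioc (0:ℝ) 1 := ⟨hh0, hh1⟩
  set v : Em m → ℝ := ftrunc u hh with hv
  have hvle : ∀ x, v x ≤ u x := by
    intro x
    rw [hv]
    unfold ftrunc
    split
    · exact le_refl _
    · exact (hufz.mem01 x).1
  have hcut_ge : ∀ a : ℝ, hh ≤ a → acut v a = acut u a := by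
    intro a haa
    ext x
    simp only [acut, mem_setOf_eq, hv]
    unfold ftrunc
    split_ifs with h
    · exact Iff.rfl
    · constructor
      · intro h2; linarith [hh0]
      · intro h2; push_neg at h; linarith
  have hcut_lt : ∀ a : ℝ, 0 < a → a < hh → acut v a = acut u hh := by
    intro a ha0 hahh
    ext x
    simp only [acut, mem_setOf_eq, hv]
    unfold ftrunc
    split_ifs with h
    · constructor
      · intro _; exact h
      · intro _; linarith
    · constructor
      · intro h2; linarith
      · intro h2; push_neg at h; linarith
  refine ⟨v, ⟨⟨?_, ?_, ?_, ?_⟩, ?_⟩, ?_⟩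
  · -- mem01
    intro x
    rw [hv]; unfold ftrunc
    split
    · exact hufz.mem01 x
    · exact ⟨le_refl _, by norm_num⟩
  · -- normal
    obtain ⟨x, hx⟩ := hufz.normal
    refine ⟨x, ?_⟩
    rw [hv]; unfold ftrunc
    rw [if_pos (by rw [hx]; exact hh1)]
    exact hx
  · -- usc
    intro x y hxy
    by_cases hux : hh ≤ u x
    · have hvx : v x = u x := by rw [hv]; unfold ftrunc; rw [if_pos hux]
      rw [hvx] at hxy
      filter_upwards [hufz.usc x y hxy] with z hz
      exact lt_of_le_of_lt (hvle z) hz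
    · push_neg at hux
      have hy0 : 0 < y := by
        have hvx : v x = 0 := by rw [hv]; unfold ftrunc; rw [if_neg (not_le.2 hux)]
        rw [hvx] at hxy; exact hxy
      filter_upwards [hufz.usc x hh hux] with z hz
      have : v z = 0 := by rw [hv]; unfold ftrunc; rw [if_neg (not_le.2 hz)]
      rw [this]; exact hy0
  · -- bddSupp
    apply Bornology.IsBounded.subset (hufz.compactCuts hh hhI).isBounded
    intro x hx
    simp only [mem_setOf_eq, hv] at hx
    unfold ftrunc at hx
    by_cases h : hh ≤ u x
    · exact h
    · rw [if_neg h] at hx; exact absurd hx (lt_irrefl 0)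
  · -- convex cuts
    intro a ha
    by_cases haa : hh ≤ a
    · rw [hcut_ge a haa]; exact hucv a ha
    · push_neg at haa
      rw [hcut_lt a ha.1 haa]; exact hucv hh hhI
  · -- dp < ε
    have hfle : ∫ a in Ioc (0:ℝ) 1, hausdorffDist (acut v a) (acut u a) ^ p ≤
        ∫ a in Ioc (0:ℝ) 1, F n₀ a := by
      apply integral_mono_of_nonneg
      · exact ae_of_all _ fun a => Real.rpow_nonneg hausdorffDist_nonneg _
      · exact hFint n₀
      · filter_upwards [ae_restrict_mem measurableSet_Ioc] with a ha
        by_cases hah : hh ≤ a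
        · rw [hcut_ge a hah, hausdorffDist_self_zero, Real.zero_rpow hp0.ne']
          exact hFnn n₀ a
        · push_neg at hah
          rw [hcut_lt a ha.1 hah]
          have hFa : F n₀ a = G a := indicator_of_mem (show a ∈ Ioo (0:ℝ) (1/(n₀+1)) from ⟨ha.1, hah⟩) G
          rw [hFa, hG]
          have hAc := hufz.compactCuts hh hhI
          have hBc := hufz.compactCuts a ha
          have hAne := acut_nonempty hufz.normal hh1
          have hBne := acut_nonempty hufz.normal ha.2
          have h1 := hdist_le_sum_zero hAc hBc hAne hBne
          have h2 : hausdorffDist (acut u hh) ({0} : Set (Em m)) ≤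
              hausdorffDist (acut u a) ({0} : Set (Em m)) :=
            hdistZ_mono (acut_mono u hah.le) hBc
          have h3 : hausdorffDist (acut u hh) (acut u a) ≤
              2 * hausdorffDist (acut u a) ({0} : Set (Em m)) := by linarith
          calc hausdorffDist (acut u hh) (acut u a) ^ p
              ≤ (2 * hausdorffDist (acut u a) ({0} : Set (Em m))) ^ p :=
                Real.rpow_le_rpow hausdorffDist_nonneg h3 hp0.le
            _ = 2 ^ p * hausdorffDist (acut u a) ({0} : Set (Em m)) ^ p :=
                Real.mul_rpow (by norm_num) hausdorffDist_nonneg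
    have hlt : ∫ a in Ioc (0:ℝ) 1, hausdorffDist (acut v a) (acut u a) ^ p < ε ^ p :=
      lt_of_le_of_lt hfle hn₀
    have h0 : 0 ≤ ∫ a in Ioc (0:ℝ) 1, hausdorffDist (acut v a) (acut u a) ^ p :=
      integral_nonneg fun a => Real.rpow_nonneg hausdorffDist_nonneg _
    unfold dp
    calc (∫ a in Ioc (0:ℝ) 1, hausdorffDist (acut v a) (acut u a) ^ p) ^ (1/p)
        < (ε ^ p) ^ (1/p) := Real.rpow_lt_rpow h0 hlt (by positivity)
      _ = ε := by rw [← Real.rpow_mul hε.le, mul_one_div_cancel hp0.ne', Real.rpow_one]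

end Part2
section Part1

open TopologicalSpace Topology

lemma completeness_part {m : ℕ} {p : ℝ} (hp : 1 ≤ p) :
    ∀ u : ℕ → Em m → ℝ,
      (∀ n, IsFuzzyBp p (u n) ∧ ∀ a ∈ Ioc (0:ℝ) 1, Convex ℝ (acut (u n) a)) →
      (∀ ε > (0:ℝ), ∃ N : ℕ, ∀ j ≥ N, ∀ k ≥ N, dp p (u j) (u k) < ε) →
      ∃ v : Em m → ℝ,
        (IsFuzzyBp p v ∧ ∀ a ∈ Ioc (0:ℝ) 1, Convex ℝ (acut v a)) ∧
        Tendsto (fun n => dp p (u n) v) atTop (𝓝 0) := by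
  intro u hu hC
  have hp0 : (0:ℝ) < p := lt_of_lt_of_le one_pos hp
  classical
  -- extract a rapidly Cauchy subsequence
  choose Nf hNf using fun k : ℕ => hC ((4:ℝ)⁻¹ ^ k) (by positivity)
  set sq : ℕ → ℕ := fun k => (Finset.range (k+1)).sup Nf + k with hsq
  have hsqN : ∀ j k : ℕ, j ≤ k → Nf j ≤ sq k := by
    intro j k hjk
    exact le_trans (Finset.le_sup (f := Nf) (Finset.mem_range.2 (Nat.lt_succ_of_le hjk)))
      (Nat.le_add_right _ _)
  have hsqk : ∀ k, k ≤ sq k := fun k => Nat.le_add_left k _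
  have hdseq : ∀ k, dp p (u (sq k)) (u (sq (k+1))) < (4:ℝ)⁻¹ ^ k := fun k =>
    hNf k (sq k) (hsqN k k le_rfl) (sq (k+1)) (hsqN k (k+1) (Nat.le_succ k))
  -- packaged cuts
  set Z0 : NonemptyCompacts (Em m) :=
    ⟨⟨({0} : Set (Em m)), isCompact_singleton⟩, singleton_nonempty 0⟩ with hZ0
  set T : ℕ → ℝ → NonemptyCompacts (Em m) := fun k a =>
    if h : a ∈ Ioc (0:ℝ) 1 then
      ⟨⟨acut (u (sq k)) a, (hu (sq k)).1.compactCuts a h⟩,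
        acut_nonempty (hu (sq k)).1.normal h.2⟩
    else Z0 with hT
  have hTcoe : ∀ k a, a ∈ Ioc (0:ℝ) 1 → (T k a : Set (Em m)) = acut (u (sq k)) a := by
    intro k a ha
    rw [hT]
    simp only [dif_pos ha]
    rfl
  set μ := volume.restrict (Ioc (0:ℝ) 1) with hμ
  have hμfin : ∀ s : Set ℝ, μ s ≠ ⊤ := by
    intro s
    apply ne_top_of_le_ne_top _ (measure_mono (subset_univ s))
    rw [hμ, Measure.restrict_apply_univ, Real.volume_Ioc]
    simp
  have hDint : ∀ j k : ℕ, IntegrableOn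
      (fun a => hausdorffDist (acut (u j) a) (acut (u k) a) ^ p) (Ioc (0:ℝ) 1) :=
    fun j k => integrableOn_hdist_pow hp (hu j).1 (hu k).1
  -- Borel-Cantelli
  set S : ℕ → Set ℝ := fun k => {a | (2:ℝ)⁻¹ ^ k ≤ dist (T k a) (T (k+1) a)} with hS
  have hmarkov : ∀ k : ℕ, μ (S k) ≤ ENNReal.ofReal ((2:ℝ)⁻¹ ^ k) := by
    intro k
    set τ : ℝ := (2:ℝ)⁻¹ ^ k with hτ
    have hτ0 : (0:ℝ) < τ := by positivity
    set g : ℝ → ℝ := fun a =>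
      hausdorffDist (acut (u (sq k)) a) (acut (u (sq (k+1))) a) ^ p with hg
    have hgint : Integrable g μ := hDint (sq k) (sq (k+1))
    have hgnn : 0 ≤ᵐ[μ] g := ae_of_all _ (fun a => Real.rpow_nonneg hausdorffDist_nonneg _)
    have hmk := mul_meas_ge_le_integral_of_nonneg hgnn hgint (τ ^ p)
    have hint : ∫ a, g a ∂μ < ((4:ℝ)⁻¹ ^ k) ^ p :=
      integral_lt_of_dp_lt hp (by positivity) (hdseq k)
    have hsub : μ (S k) ≤ μ {a | τ ^ p ≤ g a} := by
      rw [hμ, Measure.restrict_apply' measurableSet_Ioc,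
        Measure.restrict_apply' measurableSet_Ioc]
      apply measure_mono
      rintro a ⟨haS, haI⟩
      refine ⟨?_, haI⟩
      have h1 : τ ≤ dist (T k a) (T (k+1) a) := haS
      have h2 : dist (T k a) (T (k+1) a) =
          hausdorffDist (acut (u (sq k)) a) (acut (u (sq (k+1))) a) := by
        rw [NonemptyCompacts.dist_eq, hTcoe k a haI, hTcoe (k+1) a haI]
      rw [h2] at h1
      exact Real.rpow_le_rpow hτ0.le h1 hp0.le
    have hτp : (0:ℝ) < τ ^ p := Real.rpow_pos_of_pos hτ0 _
    have h5 : ((4:ℝ)⁻¹ ^ k) ^ p = τ ^ p * τ ^ p := by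
      rw [hτ, ← Real.mul_rpow (by positivity) (by positivity), ← mul_pow]
      norm_num
    have h6 : τ ^ p ≤ τ := by
      calc τ ^ p ≤ τ ^ (1:ℝ) :=
            Real.rpow_le_rpow_of_exponent_ge hτ0 (pow_le_one₀ (by norm_num) (by norm_num)) hp
        _ = τ := Real.rpow_one τ
    have h3 : (μ {a | τ ^ p ≤ g a}).toReal ≤ τ := by
      by_contra hcon
      push_neg at hcon
      have h7 : τ ^ p < (μ {a | τ ^ p ≤ g a}).toReal := lt_of_le_of_lt h6 hcon
      have h8 : τ ^ p * τ ^ p < τ ^ p * (μ {a | τ ^ p ≤ g a}).toReal :=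
        mul_lt_mul_of_pos_left h7 hτp
      rw [← h5] at h8
      have hmk' : τ ^ p * (μ {a | τ ^ p ≤ g a}).toReal ≤ ∫ a, g a ∂μ := hmk
      linarith
    calc μ (S k) ≤ μ {a | τ ^ p ≤ g a} := hsub
      _ = ENNReal.ofReal ((μ {a | τ ^ p ≤ g a}).toReal) := (ENNReal.ofReal_toReal (hμfin _)).symm
      _ ≤ ENNReal.ofReal τ := ENNReal.ofReal_le_ofReal h3
  have hBC : ∀ᵐ a ∂μ, ∀ᶠ k in atTop, a ∉ S k := by
    apply MeasureTheory.ae_eventually_notMem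
    apply ne_top_of_le_ne_top _ (ENNReal.tsum_le_tsum hmarkov)
    have heq : ∀ k : ℕ, ENNReal.ofReal ((2:ℝ)⁻¹ ^ k) = (ENNReal.ofReal 2⁻¹) ^ k := fun k =>
      ENNReal.ofReal_pow (by norm_num) k
    rw [tsum_congr heq, ENNReal.tsum_geometric]
    rw [Ne, ENNReal.inv_eq_top, tsub_eq_zero_iff_le]
    exact not_le.2 (ENNReal.ofReal_lt_one.2 (by norm_num))
  -- the limit cuts
  set L : ℝ → NonemptyCompacts (Em m) := fun a =>
    if h : ∃ LL, Tendsto (fun k => T k a) atTop (𝓝 LL) then h.choose else Z0 with hL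
  set Gset : Set ℝ := {a | a ∈ Ioc (0:ℝ) 1 ∧ Tendsto (fun k => T k a) atTop (𝓝 (L a))}
    with hGset
  have hGae : ∀ᵐ a ∂μ, a ∈ Gset := by
    filter_upwards [hBC, ae_restrict_mem measurableSet_Ioc] with a hev haI
    have hsum : Summable (fun k => dist (T k a) (T (k+1) a)) := by
      obtain ⟨K, hK⟩ := eventually_atTop.1 hev
      have h1 : Summable (fun k : ℕ => dist (T (k + K) a) (T (k + K + 1) a)) := by
        apply Summable.of_nonneg_of_le (fun k => dist_nonneg) (fun k => ?_)
          (summable_geometric_of_lt_one (by norm_num : (0:ℝ) ≤ 2⁻¹) (by norm_num))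
        have h2 := hK (k + K) (Nat.le_add_left K k)
        rw [hS] at h2
        simp only [Set.mem_setOf_eq, not_le] at h2
        calc dist (T (k + K) a) (T (k + K + 1) a) ≤ (2:ℝ)⁻¹ ^ (k + K) := h2.le
          _ ≤ (2:ℝ)⁻¹ ^ k :=
            pow_le_pow_of_le_one (by norm_num) (by norm_num) (Nat.le_add_right k K)
      exact (summable_nat_add_iff K).1 h1
    obtain ⟨LL, hLL⟩ := cauchySeq_tendsto_of_complete (cauchySeq_of_summable_dist hsum)
    have hex : ∃ LL, Tendsto (fun k => T k a) atTop (𝓝 LL) := ⟨LL, hLL⟩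
    refine ⟨haI, ?_⟩
    rw [hL]
    simp only [dif_pos hex]
    exact hex.choose_spec
  have hGnull : volume ((Ioc (0:ℝ) 1) \ Gset) = 0 := by
    have h1 := hGae
    rw [ae_iff, hμ, Measure.restrict_apply' measurableSet_Ioc] at h1
    rw [Set.diff_eq, Set.inter_comm]
    exact h1
  have hGsub : Gset ⊆ Ioc (0:ℝ) 1 := fun a ha => ha.1
  have hGbelow : ∀ c : ℝ, 0 < c → c ≤ 1 → ∃ b, b ∈ Gset ∧ b < c := by
    intro c hc hc1
    by_contra hcon
    push_neg at hcon
    have hsub2 : Ioc 0 (c/2) ⊆ (Ioc (0:ℝ) 1) \ Gset := by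
      intro b hb
      constructor
      · exact ⟨hb.1, le_trans hb.2 (by linarith)⟩
      · intro hbG
        have h3 := hcon b hbG
        have h2 : b ≤ c/2 := hb.2
        linarith
    have h1 : volume (Ioc (0:ℝ) (c/2)) ≤ volume ((Ioc (0:ℝ) 1) \ Gset) := measure_mono hsub2
    rw [hGnull] at h1
    have h2 : volume (Ioc (0:ℝ) (c/2)) = 0 := le_antisymm h1 zero_le
    rw [Real.volume_Ioc, ENNReal.ofReal_eq_zero] at h2
    linarith
  have hidx : ∀ c : ℝ, 0 < c → ∃ b, b ∈ Gset ∧ b < c := by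
    intro c hc
    obtain ⟨b, hb1, hb2⟩ := hGbelow (min c 1) (lt_min hc one_pos) (min_le_right _ _)
    exact ⟨b, hb1, lt_of_lt_of_le hb2 (min_le_left _ _)⟩
  have hLmono : ∀ a b, a ∈ Gset → b ∈ Gset → b ≤ a →
      (L a : Set (Em m)) ⊆ (L b : Set (Em m)) := by
    intro a b haG hbG hba
    exact subset_of_lim (fun k => by
      rw [hTcoe k a haG.1, hTcoe k b hbG.1]
      exact acut_mono _ hba) haG.2 hbG.2
  have hLconv : ∀ a, a ∈ Gset → Convex ℝ (L a : Set (Em m)) := by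
    intro a haG
    exact convex_of_lim (fun k => by
      rw [hTcoe k a haG.1]
      exact (hu (sq k)).2 a haG.1) haG.2
  -- the left-regularized limit family
  set K' : ℝ → Set (Em m) := fun c => ⋂ b ∈ {b | b ∈ Gset ∧ b < c}, (L b : Set (Em m))
    with hK'
  have hK'anti : ∀ c c' : ℝ, c ≤ c' → K' c' ⊆ K' c := by
    intro c c' hcc
    apply Set.biInter_subset_biInter_left
    intro b hb
    exact ⟨hb.1, lt_of_lt_of_le hb.2 hcc⟩
  have hK'closed : ∀ c, IsClosed (K' c) :=
    fun c => isClosed_biInter (fun b _ => (L b).isCompact.isClosed)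
  have hK'cpt : ∀ c, 0 < c → IsCompact (K' c) := by
    intro c hc
    obtain ⟨b, hbG, hbc⟩ := hidx c hc
    exact IsCompact.of_isClosed_subset (L b).isCompact (hK'closed c)
      (Set.biInter_subset_of_mem ⟨hbG, hbc⟩)
  have hK'ne : ∀ c, (K' c).Nonempty := by
    intro c
    rcases Set.eq_empty_or_nonempty {b | b ∈ Gset ∧ b < c} with he | hne
    · simp only [hK']
      rw [he]
      simp only [Set.mem_empty_iff_false, Set.iInter_of_empty, Set.iInter_univ,
        Set.iInter_false]
      exact ⟨0, Set.mem_univ 0⟩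
    · have hnty : Nonempty ↥{b | b ∈ Gset ∧ b < c} := hne.to_subtype
      simp only [hK']
      rw [Set.biInter_eq_iInter]
      apply IsCompact.nonempty_iInter_of_directed_nonempty_isCompact_isClosed
      · intro b₁ b₂
        rcases le_total (b₁:ℝ) (b₂:ℝ) with h | h
        · exact ⟨b₂, hLmono b₂ b₁ b₂.2.1 b₁.2.1 h, subset_rfl⟩
        · exact ⟨b₁, subset_rfl, hLmono b₁ b₂ b₁.2.1 b₂.2.1 h⟩
      · exact fun b => (L b).nonempty
      · exact fun b => (L b).isCompact
      · exact fun b => (L b).isCompact.isClosed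
  have hK'leftlim : ∀ c : ℝ, 0 < c → K' c = ⋂ b ∈ Ioo (0:ℝ) c, K' b := by
    intro c hc
    apply Set.Subset.antisymm
    · exact Set.subset_iInter₂ fun b hb => hK'anti b c hb.2.le
    · intro x hx
      simp only [hK']
      apply Set.mem_iInter₂.2
      intro g hg
      have hg0 : 0 < g := (hGsub hg.1).1
      have hb : (g + c)/2 ∈ Ioo (0:ℝ) c := ⟨by linarith, by linarith [hg.2]⟩
      have hx2 := Set.mem_iInter₂.1 hx ((g+c)/2) hb
      simp only [hK'] at hx2
      exact Set.mem_iInter₂.1 hx2 g ⟨hg.1, by linarith [hg.2]⟩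
  -- definition of v
  set vset : Em m → Set ℝ := fun x => {0} ∪ {c | c ∈ Ioc (0:ℝ) 1 ∧ x ∈ K' c} with hvset
  set v : Em m → ℝ := fun x => sSup (vset x) with hv
  have hbddv : ∀ x, BddAbove (vset x) := by
    intro x
    refine ⟨1, ?_⟩
    rintro c (rfl | hc)
    · norm_num
    · exact hc.1.2
  have hnev : ∀ x, (vset x).Nonempty := fun x => ⟨0, Or.inl rfl⟩
  have hv0 : ∀ x, 0 ≤ v x := fun x => le_csSup (hbddv x) (Or.inl rfl)
  have hv1 : ∀ x, v x ≤ 1 := by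
    intro x
    apply csSup_le (hnev x)
    rintro c (rfl | hc)
    · norm_num
    · exact hc.1.2
  have hacutv : ∀ a : ℝ, a ∈ Ioc (0:ℝ) 1 → acut v a = K' a := by
    intro a ha
    apply Set.Subset.antisymm
    · intro x hx
      rw [hK'leftlim a ha.1]
      apply Set.mem_iInter₂.2
      intro b hb
      have hx' : a ≤ v x := hx
      have h1 : b < v x := lt_of_lt_of_le hb.2 hx'
      obtain ⟨c, hc, hbc⟩ := exists_lt_of_lt_csSup (hnev x) h1
      rcases hc with rfl | hc
      · exact absurd hbc (not_lt.2 hb.1.le)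
      · exact hK'anti b c hbc.le hc.2
    · intro x hx
      show a ≤ v x
      exact le_csSup (hbddv x) (Or.inr ⟨ha, hx⟩)
  -- v is a fuzzy set
  have hnormal : ∃ x, v x = 1 := by
    obtain ⟨b₀, hb₀⟩ := hidx 1 one_pos
    have hnty : Nonempty ↥Gset := ⟨⟨b₀, hb₀.1⟩⟩
    have hZne : (⋂ b : ↥Gset, (L (b:ℝ) : Set (Em m))).Nonempty := by
      apply IsCompact.nonempty_iInter_of_directed_nonempty_isCompact_isClosed
      · intro b₁ b₂
        rcases le_total (b₁:ℝ) (b₂:ℝ) with h | h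
        · exact ⟨b₂, hLmono b₂ b₁ b₂.2 b₁.2 h, subset_rfl⟩
        · exact ⟨b₁, subset_rfl, hLmono b₁ b₂ b₁.2 b₂.2 h⟩
      · exact fun b => (L b).nonempty
      · exact fun b => (L b).isCompact
      · exact fun b => (L b).isCompact.isClosed
    obtain ⟨x₁, hx₁⟩ := hZne
    refine ⟨x₁, le_antisymm (hv1 x₁) ?_⟩
    apply le_csSup (hbddv x₁)
    refine Or.inr ⟨⟨one_pos, le_refl 1⟩, ?_⟩
    simp only [hK']
    apply Set.mem_iInter₂.2
    intro b hb
    exact Set.mem_iInter.1 hx₁ ⟨b, hb.1⟩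
  have husc : UpperSemicontinuous v := by
    intro x y hxy
    rcases lt_or_ge 1 y with hy1 | hy1
    · exact Eventually.of_forall fun z => lt_of_le_of_lt (hv1 z) hy1
    · have hy0 : 0 < y := lt_of_le_of_lt (hv0 x) hxy
      set y' : ℝ := (v x + y)/2 with hy'
      have h1 : v x < y' := by rw [hy']; linarith
      have h2 : y' < y := by rw [hy']; linarith
      have h3 : 0 < y' := by rw [hy']; linarith [hv0 x]
      have h4 : y' ≤ 1 := by rw [hy']; linarith [hv1 x]
      have hclosed : IsClosed (acut v y') := by
        rw [hacutv y' ⟨h3, h4⟩]; exact hK'closed y'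
      have hxnot : x ∉ acut v y' := by
        intro hmem
        exact absurd (hmem : y' ≤ v x) (not_le.2 h1)
      filter_upwards [hclosed.isOpen_compl.mem_nhds hxnot] with z hz
      have h5 : ¬ y' ≤ v z := hz
      push_neg at h5
      linarith
  -- a.e. identification of K' with L
  obtain ⟨Q, hQc, hQd⟩ := exists_countable_dense (Em m)
  set Bad : Set ℝ := ⋃ q ∈ Q, {c | ¬ContinuousAt (fun c' => infDist q (K' c')) c} with hBad
  have hBadc : Bad.Countable := by
    apply Set.Countable.biUnion hQc
    intro q _
    apply Monotone.countable_not_continuousAt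
    intro c c' hcc
    exact infDist_le_infDist_of_subset (hK'anti c c' hcc) (hK'ne c')
  set G' : Set ℝ := Gset \ Bad with hG'
  have hG'ae : ∀ᵐ a ∂μ, a ∈ G' := by
    have h1 : μ Bad = 0 := by
      apply le_antisymm _ zero_le
      rw [hμ, Measure.restrict_apply' measurableSet_Ioc]
      exact le_trans (measure_mono Set.inter_subset_left) (hBadc.measure_zero _).le
    filter_upwards [hGae, measure_eq_zero_iff_ae_notMem.1 h1] with a ha hb
    exact ⟨ha, hb⟩
  have hK'L : ∀ a ∈ G', K' a = (L a : Set (Em m)) := by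
    rintro a ⟨haG, haB⟩
    have hsub1 : (L a : Set (Em m)) ⊆ K' a := by
      simp only [hK']
      exact Set.subset_iInter₂ fun b hb => hLmono a b haG hb.1 hb.2.le
    apply Set.Subset.antisymm _ hsub1
    have hD : ∀ q ∈ Q, infDist q (K' a) = infDist q (L a : Set (Em m)) := by
      intro q hq
      apply le_antisymm
      · exact infDist_le_infDist_of_subset hsub1 (L a).nonempty
      · have hcont : ContinuousAt (fun c => infDist q (K' c)) a := by
          by_contra hcon
          exact haB (Set.mem_biUnion hq hcon)
        have hev : ∀ᶠ c in 𝓝[>] a, infDist q (L a : Set (Em m)) ≤ infDist q (K' c) := by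
          apply eventually_nhdsWithin_of_forall
          intro c hc
          apply infDist_le_infDist_of_subset _ (hK'ne c)
          simp only [hK']
          exact Set.biInter_subset_of_mem ⟨haG, hc⟩
        exact ge_of_tendsto hcont.continuousWithinAt hev
    have hfun : (fun z : Em m => infDist z (K' a)) =
        fun z => infDist z (L a : Set (Em m)) :=
      Continuous.ext_on hQd (continuous_infDist_pt _) (continuous_infDist_pt _) hD
    intro x hx
    have h1 : infDist x (K' a) = 0 := ((hK'closed a).mem_iff_infDist_zero (hK'ne a)).1 hx
    have h2 : infDist x (L a : Set (Em m)) = 0 := by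
      rw [← congrFun hfun x]
      exact h1
    exact ((L a).isCompact.isClosed.mem_iff_infDist_zero (L a).nonempty).2 h2
  -- membership properties of v as IsFuzzyBp
  have hmem01 : ∀ x, v x ∈ Icc (0:ℝ) 1 := fun x => ⟨hv0 x, hv1 x⟩
  have hcompactCuts : ∀ a ∈ Ioc (0:ℝ) 1, IsCompact (acut v a) := by
    intro a ha
    rw [hacutv a ha]
    exact hK'cpt a ha.1
  have hconvCuts : ∀ a ∈ Ioc (0:ℝ) 1, Convex ℝ (acut v a) := by
    intro a ha
    rw [hacutv a ha]
    exact convex_iInter₂ (fun b hb => hLconv b hb.1)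
  -- integrability of the distance to zero
  have hlp : IntegrableOn (fun a => hausdorffDist (acut v a) ({0} : Set (Em m)) ^ p)
      (Ioc (0:ℝ) 1) := by
    set RR : ℝ → ℝ := fun c => hausdorffDist (K' c) ({0} : Set (Em m)) with hRR
    have hRmono : ∀ c c' : ℝ, 0 < c → c ≤ c' → RR c' ≤ RR c := fun c c' hc hcc =>
      hdistZ_mono (hK'anti c c' hcc) (hK'cpt c hc)
    have hRmeas : AEMeasurable (fun a => RR a ^ p) μ := by
      have hmeasn : ∀ nn : ℕ, Measurable (fun a : ℝ => RR (max a (1/(nn+1))) ^ p) := by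
        intro nn
        apply Antitone.measurable
        intro c c' hcc
        have h1 : 0 < max c (1/(nn+1:ℝ)) := lt_of_lt_of_le (by positivity) (le_max_right _ _)
        exact Real.rpow_le_rpow hausdorffDist_nonneg
          (hRmono _ _ h1 (max_le_max hcc le_rfl)) hp0.le
      refine aemeasurable_of_tendsto_metrizable_ae atTop (fun nn => (hmeasn nn).aemeasurable) ?_
      filter_upwards [ae_restrict_mem measurableSet_Ioc] with a ha
      obtain ⟨N, hN⟩ := exists_nat_one_div_lt ha.1
      have hev : ∀ᶠ nn : ℕ in atTop, RR (max a (1/(nn+1:ℝ))) ^ p = RR a ^ p := by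
        rw [eventually_atTop]
        refine ⟨N, fun nn hnn => ?_⟩
        have h1 : (1:ℝ)/(nn+1) ≤ 1/(N+1) := by
          apply one_div_le_one_div_of_le (by positivity)
          have h2 : (N:ℝ) ≤ nn := Nat.cast_le.mpr hnn
          linarith
        rw [max_eq_left (by linarith)]
      exact Tendsto.congr' (hev.mono fun nn h => h.symm) tendsto_const_nhds
    set I0 : ℝ := ∫ a in Ioc (0:ℝ) 1,
      hausdorffDist (acut (u (sq 0)) a) ({0} : Set (Em m)) ^ p with hI0
    set M : ℝ := 2 ^ p * (1 + I0) with hM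
    have hRk_bound : ∀ k : ℕ,
        ∫ a in Ioc (0:ℝ) 1, hausdorffDist (acut (u (sq k)) a) ({0} : Set (Em m)) ^ p ≤ M := by
      intro k
      have hdp0 : dp p (u (sq k)) (u (sq 0)) < 1 := by
        have h := hNf 0 (sq k) (hsqN 0 k (Nat.zero_le k)) (sq 0) (hsqN 0 0 le_rfl)
        simpa using h
      have hint1 : ∫ a in Ioc (0:ℝ) 1,
          hausdorffDist (acut (u (sq k)) a) (acut (u (sq 0)) a) ^ p < 1 := by
        have h := integral_lt_of_dp_lt hp one_pos hdp0
        rwa [Real.one_rpow] at h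
      have hgint2 : IntegrableOn (fun a =>
          (2:ℝ) ^ p * (hausdorffDist (acut (u (sq k)) a) (acut (u (sq 0)) a) ^ p
            + hausdorffDist (acut (u (sq 0)) a) ({0} : Set (Em m)) ^ p)) (Ioc (0:ℝ) 1) :=
        ((hDint (sq k) (sq 0)).add (hu (sq 0)).1.lp).const_mul _
      have hb : ∫ a in Ioc (0:ℝ) 1,
          hausdorffDist (acut (u (sq k)) a) ({0} : Set (Em m)) ^ p ≤
          ∫ a in Ioc (0:ℝ) 1,
            (2:ℝ) ^ p * (hausdorffDist (acut (u (sq k)) a) (acut (u (sq 0)) a) ^ p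
              + hausdorffDist (acut (u (sq 0)) a) ({0} : Set (Em m)) ^ p) := by
        apply integral_mono_of_nonneg
        · exact ae_of_all _ fun a => Real.rpow_nonneg hausdorffDist_nonneg _
        · exact hgint2
        · filter_upwards [ae_restrict_mem measurableSet_Ioc] with a ha
          have hAk := (hu (sq k)).1.compactCuts a ha
          have hA0 := (hu (sq 0)).1.compactCuts a ha
          have hAkne := acut_nonempty (hu (sq k)).1.normal ha.2
          have hA0ne := acut_nonempty (hu (sq 0)).1.normal ha.2
          have ht : hausdorffDist (acut (u (sq k)) a) ({0} : Set (Em m)) ≤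
              hausdorffDist (acut (u (sq k)) a) (acut (u (sq 0)) a)
              + hausdorffDist (acut (u (sq 0)) a) ({0} : Set (Em m)) :=
            hausdorffDist_triangle (hEdist_ne_top hAk hA0 hAkne hA0ne)
          calc hausdorffDist (acut (u (sq k)) a) ({0} : Set (Em m)) ^ p
              ≤ (hausdorffDist (acut (u (sq k)) a) (acut (u (sq 0)) a)
                + hausdorffDist (acut (u (sq 0)) a) ({0} : Set (Em m))) ^ p :=
              Real.rpow_le_rpow hausdorffDist_nonneg ht hp0.le
            _ ≤ (2:ℝ) ^ p * (hausdorffDist (acut (u (sq k)) a) (acut (u (sq 0)) a) ^ p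
                + hausdorffDist (acut (u (sq 0)) a) ({0} : Set (Em m)) ^ p) :=
              rpow_add_le' hausdorffDist_nonneg hausdorffDist_nonneg hp0.le
      have heq : ∫ a in Ioc (0:ℝ) 1,
          (2:ℝ) ^ p * (hausdorffDist (acut (u (sq k)) a) (acut (u (sq 0)) a) ^ p
            + hausdorffDist (acut (u (sq 0)) a) ({0} : Set (Em m)) ^ p)
          = 2 ^ p * ((∫ a in Ioc (0:ℝ) 1,
              hausdorffDist (acut (u (sq k)) a) (acut (u (sq 0)) a) ^ p) + I0) := by
        rw [integral_const_mul, integral_add (hDint (sq k) (sq 0)) (hu (sq 0)).1.lp]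
      have h2p : (0:ℝ) < 2 ^ p := Real.rpow_pos_of_pos (by norm_num) _
      calc ∫ a in Ioc (0:ℝ) 1, hausdorffDist (acut (u (sq k)) a) ({0} : Set (Em m)) ^ p
          ≤ _ := hb
        _ = 2 ^ p * ((∫ a in Ioc (0:ℝ) 1,
              hausdorffDist (acut (u (sq k)) a) (acut (u (sq 0)) a) ^ p) + I0) := heq
        _ ≤ 2 ^ p * (1 + I0) := mul_le_mul_of_nonneg_left (by linarith) h2p.le
        _ = M := hM.symm
    have hRk_lint : ∀ k : ℕ, ∫⁻ a, ENNReal.ofReal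
        (hausdorffDist (acut (u (sq k)) a) ({0} : Set (Em m)) ^ p) ∂μ ≤ ENNReal.ofReal M := by
      intro k
      rw [← ofReal_integral_eq_lintegral_ofReal ((hu (sq k)).1.lp)
        (ae_of_all _ fun a => Real.rpow_nonneg hausdorffDist_nonneg _)]
      exact ENNReal.ofReal_le_ofReal (hRk_bound k)
    have hptlim : ∀ᵐ a ∂μ, Tendsto
        (fun k => hausdorffDist (acut (u (sq k)) a) ({0} : Set (Em m)) ^ p) atTop
        (𝓝 (RR a ^ p)) := by
      filter_upwards [hG'ae] with a haG'
      have haG := haG'.1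
      have h1 : Tendsto (fun k => dist (T k a) Z0) atTop (𝓝 (dist (L a) Z0)) :=
        tendsto_dist_Z0 haG.2
      have hZ0coe : (Z0 : Set (Em m)) = ({0} : Set (Em m)) := rfl
      have h2 : ∀ k, dist (T k a) Z0 =
          hausdorffDist (acut (u (sq k)) a) ({0} : Set (Em m)) := by
        intro k
        rw [NonemptyCompacts.dist_eq, hTcoe k a haG.1, hZ0coe]
      have h3 : dist (L a) Z0 = RR a := by
        show dist (L a) Z0 = hausdorffDist (K' a) ({0} : Set (Em m))
        rw [NonemptyCompacts.dist_eq, hZ0coe, hK'L a haG']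
      have h4 : (fun k => hausdorffDist (acut (u (sq k)) a) ({0} : Set (Em m)) ^ p)
          = fun k => (dist (T k a) Z0) ^ p := funext fun k => by rw [h2 k]
      rw [h4, ← h3]
      exact ((Real.continuous_rpow_const hp0.le).tendsto _).comp h1
    have hcong : (fun a => hausdorffDist (acut v a) ({0} : Set (Em m)) ^ p)
        =ᶠ[ae μ] (fun a => RR a ^ p) := by
      filter_upwards [ae_restrict_mem measurableSet_Ioc] with a ha
      show hausdorffDist (acut v a) ({0} : Set (Em m)) ^ p = hausdorffDist (K' a) ({0} : Set (Em m)) ^ p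
      rw [hacutv a ha]
    refine ⟨(hRmeas.congr hcong.symm).aestronglyMeasurable, ?_⟩
    rw [hasFiniteIntegral_iff_ofReal
      (ae_of_all _ fun a => Real.rpow_nonneg hausdorffDist_nonneg _)]
    have hfatou := lintegral_liminf_le' (μ := μ) (u := atTop)
      (f := fun k a => ENNReal.ofReal
        (hausdorffDist (acut (u (sq k)) a) ({0} : Set (Em m)) ^ p))
      (fun k => ENNReal.measurable_ofReal.comp_aemeasurable
        ((hu (sq k)).1.lp.aestronglyMeasurable.aemeasurable))
    have hliminf_eq : ∀ᵐ a ∂μ, ENNReal.ofReal (RR a ^ p) =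
        liminf (fun k => ENNReal.ofReal
          (hausdorffDist (acut (u (sq k)) a) ({0} : Set (Em m)) ^ p)) atTop := by
      filter_upwards [hptlim] with a hta
      exact (((ENNReal.continuous_ofReal.tendsto _).comp hta).liminf_eq).symm
    calc ∫⁻ a, ENNReal.ofReal (hausdorffDist (acut v a) ({0} : Set (Em m)) ^ p) ∂μ
        = ∫⁻ a, ENNReal.ofReal (RR a ^ p) ∂μ :=
          lintegral_congr_ae (hcong.mono fun a h => congrArg ENNReal.ofReal h)
      _ = ∫⁻ a, liminf (fun k => ENNReal.ofReal
            (hausdorffDist (acut (u (sq k)) a) ({0} : Set (Em m)) ^ p)) atTop ∂μ :=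
          lintegral_congr_ae hliminf_eq
      _ ≤ liminf (fun k => ∫⁻ a, ENNReal.ofReal
            (hausdorffDist (acut (u (sq k)) a) ({0} : Set (Em m)) ^ p) ∂μ) atTop := hfatou
      _ ≤ ENNReal.ofReal M :=
          liminf_le_of_frequently_le (Frequently.of_forall fun k => hRk_lint k)
      _ < ⊤ := ENNReal.ofReal_lt_top
  -- convergence
  have hconv : Tendsto (fun nn => dp p (u nn) v) atTop (𝓝 0) := by
    apply Metric.tendsto_atTop.2
    intro ε hε
    obtain ⟨N, hN⟩ := hC (ε/2) (half_pos hε)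
    refine ⟨N, fun nn hnn => ?_⟩
    rw [Real.dist_eq, sub_zero, abs_of_nonneg dp_nonneg]
    have hkey : dp p (u nn) v ≤ ε/2 := by
      apply dp_le_of_integral_le hp0 (half_pos hε).le
      set W : ℝ → ℝ := fun a => hausdorffDist (acut (u nn) a) (acut v a) ^ p with hW
      set Fk : ℕ → ℝ → ℝ := fun k a =>
        hausdorffDist (acut (u nn) a) (acut (u (sq (k + N))) a) ^ p with hFk
      have hFk_int : ∀ k, IntegrableOn (Fk k) (Ioc (0:ℝ) 1) :=
        fun k => integrableOn_hdist_pow hp (hu nn).1 (hu (sq (k+N))).1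
      have hFk_small : ∀ k, ∫ a in Ioc (0:ℝ) 1, Fk k a < (ε/2) ^ p := by
        intro k
        exact integral_lt_of_dp_lt hp (half_pos hε)
          (hN nn hnn (sq (k+N)) (le_trans (Nat.le_add_left N k) (hsqk (k+N))))
      have hptlim : ∀ᵐ a ∂μ, Tendsto (fun k => Fk k a) atTop (𝓝 (W a)) := by
        filter_upwards [hG'ae] with a haG'
        have haG := haG'.1
        have haI := haG.1
        have hAc := (hu nn).1.compactCuts a haI
        have hAne := acut_nonempty (hu nn).1.normal haI.2
        have h1 : Tendsto (fun k => T (k + N) a) atTop (𝓝 (L a)) :=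
          haG.2.comp (tendsto_add_atTop_nat N)
        have h2 := hdist_tendsto_snd hAc hAne h1
        have h3 : (fun k => hausdorffDist (acut (u nn) a) ((T (k+N) a : Set (Em m))))
            = fun k => hausdorffDist (acut (u nn) a) (acut (u (sq (k+N))) a) :=
          funext fun k => by rw [hTcoe (k+N) a haI]
        have h4 : hausdorffDist (acut (u nn) a) ((L a : Set (Em m)))
            = hausdorffDist (acut (u nn) a) (acut v a) := by
          rw [hacutv a haI, hK'L a haG']
        rw [h3, h4] at h2
        exact ((Real.continuous_rpow_const hp0.le).tendsto _).comp h2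
      have hWmeas : AEMeasurable W μ :=
        aemeasurable_of_tendsto_metrizable_ae atTop
          (fun k => (hFk_int k).aestronglyMeasurable.aemeasurable) hptlim
      have hWnn : 0 ≤ᵐ[μ] W := ae_of_all _ fun a => Real.rpow_nonneg hausdorffDist_nonneg _
      have hliminf_eq : ∀ᵐ a ∂μ, ENNReal.ofReal (W a) =
          liminf (fun k => ENNReal.ofReal (Fk k a)) atTop := by
        filter_upwards [hptlim] with a hta
        exact (((ENNReal.continuous_ofReal.tendsto _).comp hta).liminf_eq).symm
      have hfatou := lintegral_liminf_le' (μ := μ) (u := atTop)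
        (f := fun k a => ENNReal.ofReal (Fk k a))
        (fun k => ENNReal.measurable_ofReal.comp_aemeasurable
          ((hFk_int k).aestronglyMeasurable.aemeasurable))
      have hlint : ∫⁻ a, ENNReal.ofReal (W a) ∂μ ≤ ENNReal.ofReal ((ε/2) ^ p) := by
        calc ∫⁻ a, ENNReal.ofReal (W a) ∂μ
            = ∫⁻ a, liminf (fun k => ENNReal.ofReal (Fk k a)) atTop ∂μ :=
            lintegral_congr_ae hliminf_eq
          _ ≤ liminf (fun k => ∫⁻ a, ENNReal.ofReal (Fk k a) ∂μ) atTop := hfatou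
          _ ≤ ENNReal.ofReal ((ε/2) ^ p) := by
            refine liminf_le_of_frequently_le (Frequently.of_forall fun k => ?_)
              (by isBoundedDefault)
            rw [← ofReal_integral_eq_lintegral_ofReal (hFk_int k)
              (ae_of_all _ fun a => Real.rpow_nonneg hausdorffDist_nonneg _)]
            exact ENNReal.ofReal_le_ofReal (hFk_small k).le
      have heqB : ∫ a in Ioc (0:ℝ) 1, W a = (∫⁻ a, ENNReal.ofReal (W a) ∂μ).toReal :=
        integral_eq_lintegral_of_nonneg_ae hWnn hWmeas.aestronglyMeasurable
      calc ∫ a in Ioc (0:ℝ) 1, hausdorffDist (acut (u nn) a) (acut v a) ^ p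
          = (∫⁻ a, ENNReal.ofReal (W a) ∂μ).toReal := heqB
        _ ≤ (ε/2) ^ p := ENNReal.toReal_le_of_le_ofReal
            (Real.rpow_nonneg (half_pos hε).le _) hlint
    linarith
  exact ⟨v, ⟨⟨hmem01, hnormal, husc, hcompactCuts, hlp⟩, hconvCuts⟩, hconv⟩

end Part1

/-- `(E^{m,p}, d_p)` is the completion of `(E^m, d_p)`: it is
complete and `E^m` is dense in it. -/
theorem Emp_completion_of_Em {m : ℕ} (p : ℝ) (hp : 1 ≤ p) :
    (∀ u : ℕ → Em m → ℝ,
        (∀ n, IsFuzzyBp p (u n) ∧ ∀ a ∈ Ioc (0:ℝ) 1, Convex ℝ (acut (u n) a)) →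
        (∀ ε > (0:ℝ), ∃ N : ℕ, ∀ j ≥ N, ∀ k ≥ N, dp p (u j) (u k) < ε) →
        ∃ v : Em m → ℝ,
          (IsFuzzyBp p v ∧ ∀ a ∈ Ioc (0:ℝ) 1, Convex ℝ (acut v a)) ∧
          Tendsto (fun n => dp p (u n) v) atTop (nhds 0)) ∧
    (∀ u : Em m → ℝ,
        (IsFuzzyBp p u ∧ ∀ a ∈ Ioc (0:ℝ) 1, Convex ℝ (acut u a)) →
        ∀ ε > (0:ℝ), ∃ v : Em m → ℝ,
          (IsFuzzyB v ∧ ∀ a ∈ Ioc (0:ℝ) 1, Convex ℝ (acut v a)) ∧ dp p v u < ε) := by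
  exact ⟨completeness_part hp, fun u hu => density_part hp u hu⟩

end
end

section
/- Representation theorem for F_B(ℝ^m)^p: if a family {v_α : α ∈ [0,1]} of subsets of ℝ^m satisfies (i) v_λ is nonempty compact for λ ∈ (0,1], (ii) v_λ = ⋂_{γ<λ} v_γ for λ ∈ (0,1], (iii) v_0 = closure(⋃_{γ>0} v_γ), and (iv) (∫_0^1 H(v_α, {0})^p dα)^{1/p} < ∞, then there exists a unique u ∈ F_B(ℝ^m)^p with [u]_λ = v_λ for all λ ∈ [0,1]; conversely the family of cuts of any u ∈ F_B(ℝ^m)^p satisfies (i)–(iv). -/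
/-!
The fuzzy set is recovered from its cuts as `u x = sup {λ ∈ (0,1] | x ∈ v λ}` (with `sup ∅ = 0`).
If `u x ≥ λ`, then every `γ < λ` is exceeded by some `b` with `x ∈ v b`, and `v b ⊆ v γ` by (ii);
so (ii) makes `[u]_λ = v λ`, and then (iii) identifies the support with `v 0`. Upper
semicontinuity is closedness of the cuts, and a `[0,1]`-valued function is determined by its
positive cuts, which gives uniqueness. Conversely, (ii) and (iii) hold for the cuts of any
`[0,1]`-valued function, and (i), (iv) are part of the definition of `F_B(ℝ^m)^p`.
-/

open Metric Set MeasureTheory Filter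

noncomputable section

section

variable {m : ℕ}

lemma cutF_zero (u : Em m → ℝ) : cutF u 0 = fsupp u := if_pos rfl

lemma cutF_of_pos (u : Em m → ℝ) {a : ℝ} (ha : 0 < a) : cutF u a = acut u a := if_neg ha.ne'

lemma le_of_acut_subset {u₁ u₂ : Em m → ℝ} (h₁ : ∀ x, u₁ x ≤ 1) (h₂ : ∀ x, 0 ≤ u₂ x)
    (h : ∀ a ∈ Ioc (0:ℝ) 1, acut u₁ a ⊆ acut u₂ a) (x : Em m) : u₁ x ≤ u₂ x := by
  by_contra! hlt
  have hx : u₁ x ≤ u₂ x := h (u₁ x) ⟨(h₂ x).trans_lt hlt, h₁ x⟩ (show u₁ x ≤ u₁ x from le_rfl)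
  exact hlt.not_ge hx

lemma eq_of_acut_eq {u₁ u₂ : Em m → ℝ} (h₁ : ∀ x, u₁ x ∈ Icc (0:ℝ) 1)
    (h₂ : ∀ x, u₂ x ∈ Icc (0:ℝ) 1) (h : ∀ a ∈ Ioc (0:ℝ) 1, acut u₁ a = acut u₂ a) :
    u₁ = u₂ :=
  funext fun x => le_antisymm
    (le_of_acut_subset (fun y => (h₁ y).2) (fun y => (h₂ y).1) (fun a ha => (h a ha).le) x)
    (le_of_acut_subset (fun y => (h₂ y).2) (fun y => (h₁ y).1) (fun a ha => (h a ha).ge) x)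

lemma upperSemicontinuous_of_isClosed_acut {u : Em m → ℝ} (h₀ : ∀ x, 0 ≤ u x)
    (h₁ : ∀ x, u x ≤ 1) (hc : ∀ a ∈ Ioc (0:ℝ) 1, IsClosed (acut u a)) :
    UpperSemicontinuous u := by
  refine upperSemicontinuous_iff_isClosed_preimage.2 fun a => ?_
  change IsClosed (acut u a)
  rcases le_or_gt a 0 with ha | ha
  · have : acut u a = univ := eq_univ_of_forall fun x => show a ≤ u x from ha.trans (h₀ x)
    exact this ▸ isClosed_univ
  rcases le_or_gt a 1 with ha1 | ha1
  · exact hc a ⟨ha, ha1⟩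
  · have : acut u a = ∅ :=
      eq_empty_of_forall_notMem fun x (hx : a ≤ u x) => (hx.trans (h₁ x)).not_gt ha1
    exact this ▸ isClosed_empty

section Converse

lemma acut_eq_biInter_cutF (u : Em m → ℝ) {l : ℝ} (hl : 0 < l) :
    acut u l = ⋂ g ∈ Ico (0:ℝ) l, cutF u g := by
  ext x
  simp only [mem_iInter]
  constructor
  · intro hx g hg
    rcases hg.1.eq_or_lt with rfl | hg0
    · rw [cutF_zero]
      exact subset_closure (show 0 < u x from hl.trans_le hx)
    · rw [cutF_of_pos u hg0]
      exact hg.2.le.trans hx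
  · intro hx
    refine show l ≤ u x from le_of_forall_lt fun g hgl => ?_
    by_contra! hug
    obtain ⟨c, hc, hcl⟩ := exists_between (max_lt hgl hl)
    have hcx := hx c ⟨(le_max_right _ _).trans hc.le, hcl⟩
    rw [cutF_of_pos u ((le_max_right _ _).trans_lt hc)] at hcx
    exact (hug.trans_lt ((le_max_left _ _).trans_lt hc)).not_ge hcx

lemma setOf_pos_eq_biUnion_cutF {u : Em m → ℝ} (h₁ : ∀ x, u x ≤ 1) :
    {x | 0 < u x} = ⋃ g ∈ Ioc (0:ℝ) 1, cutF u g := by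
  ext x
  rw [mem_iUnion₂]
  constructor
  · intro (hx : 0 < u x)
    exact ⟨u x, ⟨hx, h₁ x⟩, by rw [cutF_of_pos u hx]; exact show u x ≤ u x from le_rfl⟩
  · rintro ⟨g, hg, hxg⟩
    rw [cutF_of_pos u hg.1] at hxg
    exact hg.1.trans_le hxg

lemma goodFamily_cutF {p : ℝ} {u : Em m → ℝ} (hu : IsFuzzyBp p u) : GoodFamily p (cutF u) := by
  obtain ⟨x₁, hx₁⟩ := hu.normal
  refine ⟨fun l hl => ?_, fun l hl => ?_, ?_, ?_⟩
  · rw [cutF_of_pos u hl.1]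
    exact ⟨⟨x₁, show l ≤ u x₁ from hx₁ ▸ hl.2⟩, hu.compactCuts l hl⟩
  · rw [cutF_of_pos u hl.1, acut_eq_biInter_cutF u hl.1]
  · rw [cutF_zero, fsupp, setOf_pos_eq_biUnion_cutF fun x => (hu.mem01 x).2]
  · exact hu.lp.congr_fun (fun a ha => by rw [cutF_of_pos u ha.1]) measurableSet_Ioc

end Converse

section OfCuts

/-- `sSup ∅ = 0` in `ℝ` supplies the value `0` at points lying in no `v λ`. -/
def ofCuts (v : ℝ → Set (Em m)) (x : Em m) : ℝ :=
  sSup {a | a ∈ Ioc (0:ℝ) 1 ∧ x ∈ v a}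

variable (v : ℝ → Set (Em m))

lemma ofCuts_nonneg (x : Em m) : 0 ≤ ofCuts v x :=
  Real.sSup_nonneg fun _ hb => hb.1.1.le

lemma ofCuts_le_one (x : Em m) : ofCuts v x ≤ 1 :=
  Real.sSup_le (fun _ hb => hb.1.2) zero_le_one

lemma ofCuts_mem_Icc (x : Em m) : ofCuts v x ∈ Icc (0:ℝ) 1 :=
  ⟨ofCuts_nonneg v x, ofCuts_le_one v x⟩

lemma le_ofCuts {a : ℝ} (ha : a ∈ Ioc (0:ℝ) 1) {x : Em m} (hx : x ∈ v a) : a ≤ ofCuts v x :=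
  le_csSup ⟨1, fun _ hb => hb.1.2⟩ ⟨ha, hx⟩

lemma exists_mem_of_lt_ofCuts {g : ℝ} (hg : 0 ≤ g) {x : Em m} (hgx : g < ofCuts v x) :
    ∃ b ∈ Ioc (0:ℝ) 1, g < b ∧ x ∈ v b := by
  have hne : {a | a ∈ Ioc (0:ℝ) 1 ∧ x ∈ v a}.Nonempty := nonempty_iff_ne_empty.2 fun h =>
    hgx.not_ge (by rw [ofCuts, h, Real.sSup_empty]; exact hg)
  obtain ⟨b, ⟨hb, hxb⟩, hgb⟩ := exists_lt_of_lt_csSup hne hgx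
  exact ⟨b, hb, hgb, hxb⟩

variable {v}

lemma acut_ofCuts (hv : ∀ l ∈ Ioc (0:ℝ) 1, v l = ⋂ g ∈ Ico (0:ℝ) l, v g)
    {a : ℝ} (ha : a ∈ Ioc (0:ℝ) 1) : acut (ofCuts v) a = v a := by
  ext x
  refine ⟨fun hx => ?_, le_ofCuts v ha⟩
  rw [hv a ha]
  refine mem_iInter₂.2 fun g hg => ?_
  obtain ⟨b, hb, hgb, hxb⟩ := exists_mem_of_lt_ofCuts v hg.1 (hg.2.trans_le hx)
  rw [hv b hb] at hxb
  exact mem_iInter₂.1 hxb g ⟨hg.1, hgb⟩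

lemma setOf_ofCuts_pos : {x | 0 < ofCuts v x} = ⋃ g ∈ Ioc (0:ℝ) 1, v g := by
  ext x
  rw [mem_iUnion₂]
  constructor
  · intro (hx : 0 < ofCuts v x)
    obtain ⟨b, hb, -, hxb⟩ := exists_mem_of_lt_ofCuts v le_rfl hx
    exact ⟨b, hb, hxb⟩
  · rintro ⟨g, hg, hxg⟩
    exact hg.1.trans_le (le_ofCuts v hg hxg)

lemma cutF_ofCuts {p : ℝ} (hv : GoodFamily p v) {a : ℝ} (ha : a ∈ Icc (0:ℝ) 1) :
    cutF (ofCuts v) a = v a := by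
  obtain ⟨-, hinter, hsupp, -⟩ := hv
  rcases ha.1.eq_or_lt with rfl | ha0
  · rw [cutF_zero, fsupp, setOf_ofCuts_pos, hsupp]
  · rw [cutF_of_pos _ ha0, acut_ofCuts hinter ⟨ha0, ha.2⟩]

lemma isFuzzyBp_ofCuts {p : ℝ} (hv : GoodFamily p v) : IsFuzzyBp p (ofCuts v) := by
  obtain ⟨hcpt, hinter, -, hint⟩ := hv
  have hcut := fun a (ha : a ∈ Ioc (0:ℝ) 1) => acut_ofCuts hinter ha
  have h1 : (1:ℝ) ∈ Ioc 0 1 := ⟨one_pos, le_rfl⟩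
  obtain ⟨x₁, hx₁⟩ := (hcpt 1 h1).1
  refine ⟨ofCuts_mem_Icc v, ⟨x₁, (ofCuts_le_one v x₁).antisymm (le_ofCuts v h1 hx₁)⟩,
    upperSemicontinuous_of_isClosed_acut (ofCuts_nonneg v) (ofCuts_le_one v)
      fun a ha => hcut a ha ▸ (hcpt a ha).2.isClosed,
    fun a ha => hcut a ha ▸ (hcpt a ha).2, ?_⟩
  exact hint.congr_fun (fun a ha => by rw [hcut a ha]) measurableSet_Ioc

end OfCuts

end

theorem representation_theorem_fuzzyBp_general {m : ℕ} (p : ℝ) :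
    (∀ v : ℝ → Set (Em m), GoodFamily p v →
        ∃! u : Em m → ℝ, IsFuzzyBp p u ∧ ∀ a ∈ Icc (0:ℝ) 1, cutF u a = v a) ∧
    (∀ u : Em m → ℝ, IsFuzzyBp p u → GoodFamily p (cutF u)) := by
  refine ⟨fun v hv => ⟨ofCuts v, ⟨isFuzzyBp_ofCuts hv, fun a => cutF_ofCuts hv⟩, ?_⟩,
    fun u => goodFamily_cutF⟩
  rintro u ⟨hu, huv⟩
  refine eq_of_acut_eq hu.mem01 (ofCuts_mem_Icc v) fun a ha => ?_
  rw [← cutF_of_pos u ha.1, ← cutF_of_pos _ ha.1, huv a (Ioc_subset_Icc_self ha),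
    cutF_ofCuts hv (Ioc_subset_Icc_self ha)]

/-- Representation theorem for `F_B(ℝ^m)^p`: a family satisfying
(i)–(iv) is the cut-family of a unique element of `F_B(ℝ^m)^p`, and conversely
the cut-family of any element satisfies (i)–(iv). -/
theorem representation_theorem_fuzzyBp {m : ℕ} (p : ℝ) (hp : 1 ≤ p) :
    (∀ v : ℝ → Set (Em m), GoodFamily p v →
        ∃! u : Em m → ℝ, IsFuzzyBp p u ∧ ∀ a ∈ Icc (0:ℝ) 1, cutF u a = v a) ∧
    (∀ u : Em m → ℝ, IsFuzzyBp p u → GoodFamily p (cutF u)) :=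
  representation_theorem_fuzzyBp_general p

end
end
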